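/- arXiv:1608.02222 — 6 statements merged into one kernel-verified Lean document; each statement's English description precedes it below -/
import Mathlib

section
/- Algebraic completeness of LRC: for all LRC formula terms A and B, if A ⊬_LRC B (i.e. B is not derivable from A in the Hilbert system H.LRC), then there exists an algebraic LRC-model M = (F, v_Fm, v_Res) such that v_Fm(A) ≰ v_Fm(B) in the Heyting algebra A of F. -/
/-! ## Syntax of LRC: resource terms and formula terms -/

/-- Resource terms of LRC: atomic resources, units `1` and `0`, fusion `·`,
join `⊔` and meet `⊓`. -/
inductive ResTerm : Type where
  | atom : ℕ → ResTerm
  | one : ResTerm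
  | zero : ResTerm
  | mul : ResTerm → ResTerm → ResTerm
  | rjoin : ResTerm → ResTerm → ResTerm
  | rmeet : ResTerm → ResTerm → ResTerm

/-- Formula terms of LRC: atomic propositions, `⊤`, `⊥`, `∨`, `∧`, `→`,
`α ▷ A` (`box`), `◇A` (`dia`), `◇'α` (`diaR`), `α ▷' β` (`boxR`). -/
inductive FmTerm : Type where
  | atom : ℕ → FmTerm
  | top : FmTerm
  | bot : FmTerm
  | or : FmTerm → FmTerm → FmTerm
  | and : FmTerm → FmTerm → FmTerm
  | imp : FmTerm → FmTerm → FmTerm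
  | box : ResTerm → FmTerm → FmTerm
  | dia : FmTerm → FmTerm
  | diaR : ResTerm → FmTerm
  | boxR : ResTerm → ResTerm → FmTerm

/-! ## The Hilbert system H.LRC -/

/-- The pure-resource entailment relation of H.LRC: the least preorder on
resource terms containing the lattice entailments for `⊔`,`⊓` (R1),
associativity of `·` with unit `1` (R2), `α ⊢ 1` and `0 ⊢ α` (R3),
distribution of `·` over `⊔` (R4), closed under the monotonicity rules for `·`. -/
inductive RDer : ResTerm → ResTerm → Prop where
  | refl (α) : RDer α α
  | trans {α β γ} : RDer α β → RDer β γ → RDer α γ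
  | le_one (α) : RDer α .one
  | zero_le (α) : RDer .zero α
  | meet_le_left (α β) : RDer (.rmeet α β) α
  | meet_le_right (α β) : RDer (.rmeet α β) β
  | le_meet {γ α β} : RDer γ α → RDer γ β → RDer γ (.rmeet α β)
  | le_join_left (α β) : RDer α (.rjoin α β)
  | le_join_right (α β) : RDer β (.rjoin α β)
  | join_le {α β γ} : RDer α γ → RDer β γ → RDer (.rjoin α β) γ
  | distrib (α β γ) :
      RDer (.rmeet α (.rjoin β γ)) (.rjoin (.rmeet α β) (.rmeet α γ))
  | mul_assoc₁ (α β γ) : RDer (.mul (.mul α β) γ) (.mul α (.mul β γ))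
  | mul_assoc₂ (α β γ) : RDer (.mul α (.mul β γ)) (.mul (.mul α β) γ)
  | mul_one₁ (α) : RDer (.mul α .one) α
  | mul_one₂ (α) : RDer α (.mul α .one)
  | one_mul₁ (α) : RDer (.mul .one α) α
  | one_mul₂ (α) : RDer α (.mul .one α)
  | mul_join_left (α β γ) :
      RDer (.mul α (.rjoin β γ)) (.rjoin (.mul α β) (.mul α γ))
  | mul_join_right (α β γ) :
      RDer (.mul (.rjoin β γ) α) (.rjoin (.mul β α) (.mul γ α))
  | mul_mono_left {α β} (γ) : RDer α β → RDer (.mul α γ) (.mul β γ)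
  | mul_mono_right {α β} (γ) : RDer α β → RDer (.mul γ α) (.mul γ β)

/-- The consequence relation of the Hilbert system H.LRC on formula terms:
`FDer A B` holds iff `A ⊢_LRC B`, i.e. a proof of `B` exists in H.LRC which
possibly uses `A`.  It is axiomatised as the least preorder containing the
intuitionistic entailments and the axiom schemas D1-D4, B1-B7, BD1, BD2
(as schemas, so closure under uniform substitution is automatic), closed
under the monotonicity/antitonicity rules MB, MD, AB, MD', MB', AB'. -/
inductive FDer : FmTerm → FmTerm → Prop where
  | refl (A) : FDer A A
  | trans {A B C} : FDer A B → FDer B C → FDer A C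
  -- intuitionistic propositional logic
  | le_top (A) : FDer A .top
  | bot_le (A) : FDer .bot A
  | and_le_left (A B) : FDer (.and A B) A
  | and_le_right (A B) : FDer (.and A B) B
  | le_and {C A B} : FDer C A → FDer C B → FDer C (.and A B)
  | le_or_left (A B) : FDer A (.or A B)
  | le_or_right (A B) : FDer B (.or A B)
  | or_le {A B C} : FDer A C → FDer B C → FDer (.or A B) C
  | imp_intro {C A B} : FDer (.and C A) B → FDer C (.imp A B)
  | imp_elim {C A B} : FDer C (.imp A B) → FDer (.and C A) B
  -- axiom schemas for ◇ and ◇'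
  | d1₁ (A B) : FDer (.dia (.or A B)) (.or (.dia A) (.dia B))
  | d1₂ (A B) : FDer (.or (.dia A) (.dia B)) (.dia (.or A B))
  | d2 : FDer (.dia .bot) .bot
  | d3₁ (α β) : FDer (.diaR (.rjoin α β)) (.or (.diaR α) (.diaR β))
  | d3₂ (α β) : FDer (.or (.diaR α) (.diaR β)) (.diaR (.rjoin α β))
  | d4 : FDer (.diaR .zero) .bot
  -- axiom schemas for ▷ and ▷'
  | b1₁ (α β A) : FDer (.box (.rjoin α β) A) (.and (.box α A) (.box β A))
  | b1₂ (α β A) : FDer (.and (.box α A) (.box β A)) (.box (.rjoin α β) A)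
  | b2 (A) : FDer .top (.box .zero A)
  | b3 (α β A) : FDer (.box α (.box β A)) (.box (.mul α β) A)
  | b4₁ (α β γ) : FDer (.boxR (.rjoin α β) γ) (.and (.boxR α γ) (.boxR β γ))
  | b4₂ (α β γ) : FDer (.and (.boxR α γ) (.boxR β γ)) (.boxR (.rjoin α β) γ)
  | b5 (α) : FDer .top (.boxR .zero α)
  | b6₁ (α β γ) : FDer (.boxR α (.rmeet β γ)) (.and (.boxR α β) (.boxR α γ))
  | b6₂ (α β γ) : FDer (.and (.boxR α β) (.boxR α γ)) (.boxR α (.rmeet β γ))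
  | b7 (α) : FDer .top (.boxR α .one)
  -- interaction axiom schemas
  | bd1 (α A) : FDer (.and (.diaR α) (.box α A)) (.dia A)
  | bd2 (α β) : FDer (.boxR α β) (.box α (.diaR β))
  -- monotonicity rules
  | mb {A B} (α) : FDer A B → FDer (.box α A) (.box α B)
  | md {A B} : FDer A B → FDer (.dia A) (.dia B)
  | ab (A) {α β} : RDer α β → FDer (.box β A) (.box α A)
  | mdr {α β} : RDer α β → FDer (.diaR α) (.diaR β)
  | mbr (γ) {α β} : RDer α β → FDer (.boxR γ α) (.boxR γ β)
  | abr (γ) {α β} : RDer α β → FDer (.boxR β γ) (.boxR α γ)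

/-- `A` is a theorem of the Hilbert system H.LRC. -/
def LRCThm (A : FmTerm) : Prop := FDer .top A
/-! ## Heterogeneous LRC-algebras -/

/-- A heterogeneous LRC-algebra `F = (W, R, ▷, ◇, ▷', ◇')`: `W` is a Heyting
algebra, `R` is a bounded distributive lattice with an associative product
`·` (here `mul`) preserving finite joins in each coordinate whose unit is the
top element `1 = ⊤` of `R`; `◇ : W → W` (`dia`) and `◇' : R → W` (`diaR`)
preserve finite joins; `▷ : R × W → W` (`box`) turns finite joins in its first
coordinate into meets and is monotone in its second coordinate;
`▷' : R × R → W` (`boxR`) turns finite joins in its first coordinate into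
meets and preserves finite meets in its second coordinate; and the axioms
B3, BD1, BD2 hold. -/
structure LRCAlgebra (W : Type*) (R : Type*) [iW : HeytingAlgebra W]
    [iR : DistribLattice R] [iB : BoundedOrder R] where
  mul : R → R → R
  mul_assoc : ∀ a b c, mul (mul a b) c = mul a (mul b c)
  mul_top : ∀ a, mul a ⊤ = a
  top_mul : ∀ a, mul ⊤ a = a
  mul_sup_left : ∀ a b c, mul (a ⊔ b) c = mul a c ⊔ mul b c
  mul_sup_right : ∀ a b c, mul a (b ⊔ c) = mul a b ⊔ mul a c
  mul_bot_left : ∀ a, mul ⊥ a = ⊥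
  mul_bot_right : ∀ a, mul a ⊥ = ⊥
  dia : W → W
  dia_bot : dia ⊥ = ⊥
  dia_sup : ∀ a b, dia (a ⊔ b) = dia a ⊔ dia b
  diaR : R → W
  diaR_bot : diaR ⊥ = ⊥
  diaR_sup : ∀ a b, diaR (a ⊔ b) = diaR a ⊔ diaR b
  box : R → W → W
  box_sup : ∀ α β a, box (α ⊔ β) a = box α a ⊓ box β a
  box_bot : ∀ a, box ⊥ a = ⊤
  box_mono : ∀ (α : R) {a b : W}, a ≤ b → box α a ≤ box α b
  boxR : R → R → W
  boxR_sup : ∀ α β γ, boxR (α ⊔ β) γ = boxR α γ ⊓ boxR β γ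
  boxR_bot : ∀ γ, boxR ⊥ γ = ⊤
  boxR_inf : ∀ α β γ, boxR α (β ⊓ γ) = boxR α β ⊓ boxR α γ
  boxR_top : ∀ α, boxR α ⊤ = ⊤
  b3 : ∀ α β a, box α (box β a) ≤ box (mul α β) a
  bd1 : ∀ α a, diaR α ⊓ box α a ≤ dia a
  bd2 : ∀ α β, boxR α β ≤ box α (diaR β)
/-! ## Algebraic LRC-models: interpretation of terms -/

variable {W R : Type*} [HeytingAlgebra W] [DistribLattice R] [BoundedOrder R]

/-- The homomorphic extension of a resource valuation `vR : AtRes → R`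
to all resource terms. -/
def ResTerm.interp (F : LRCAlgebra W R) (vR : ℕ → R) : ResTerm → R
  | .atom n => vR n
  | .one => ⊤
  | .zero => ⊥
  | .mul a b => F.mul (a.interp F vR) (b.interp F vR)
  | .rjoin a b => a.interp F vR ⊔ b.interp F vR
  | .rmeet a b => a.interp F vR ⊓ b.interp F vR

/-- The homomorphic extension of valuations `vF : AtProp → W`, `vR : AtRes → R`
to all formula terms. -/
def FmTerm.interp (F : LRCAlgebra W R) (vF : ℕ → W) (vR : ℕ → R) : FmTerm → W
  | .atom n => vF n
  | .top => ⊤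
  | .bot => ⊥
  | .or a b => a.interp F vF vR ⊔ b.interp F vF vR
  | .and a b => a.interp F vF vR ⊓ b.interp F vF vR
  | .imp a b => a.interp F vF vR ⇨ b.interp F vF vR
  | .box α a => F.box (α.interp F vR) (a.interp F vF vR)
  | .dia a => F.dia (a.interp F vF vR)
  | .diaR α => F.diaR (α.interp F vR)
  | .boxR α β => F.boxR (α.interp F vR) (β.interp F vR)

/-! ## Lindenbaum–Tarski construction -/

namespace LRCLind

instance resSetoid : Setoid ResTerm :=
  ⟨fun a b => RDer a b ∧ RDer b a,
   fun a => ⟨.refl a, .refl a⟩,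
   fun h => ⟨h.2, h.1⟩,
   fun h₁ h₂ => ⟨h₁.1.trans h₂.1, h₂.2.trans h₁.2⟩⟩

instance fmSetoid : Setoid FmTerm :=
  ⟨fun a b => FDer a b ∧ FDer b a,
   fun a => ⟨.refl a, .refl a⟩,
   fun h => ⟨h.2, h.1⟩,
   fun h₁ h₂ => ⟨h₁.1.trans h₂.1, h₂.2.trans h₁.2⟩⟩

abbrev RQ : Type := Quotient resSetoid
abbrev FQ : Type := Quotient fmSetoid

def rmk (a : ResTerm) : RQ := Quotient.mk resSetoid a
def fmk (a : FmTerm) : FQ := Quotient.mk fmSetoid a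

/-! ### Order on the resource quotient -/

instance : PartialOrder RQ where
  le := Quotient.lift₂ RDer (fun _ _ _ _ h₁ h₂ => propext
    ⟨fun h => h₁.2.trans (h.trans h₂.1), fun h => h₁.1.trans (h.trans h₂.2)⟩)
  le_refl := fun q => Quotient.inductionOn q fun a => RDer.refl a
  le_trans := fun q₁ q₂ q₃ => Quotient.inductionOn₃ q₁ q₂ q₃
    (fun _ _ _ h₁ h₂ => RDer.trans h₁ h₂)
  le_antisymm := fun q₁ q₂ => Quotient.inductionOn₂ q₁ q₂
    (fun _ _ h₁ h₂ => Quotient.sound ⟨h₁, h₂⟩)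

lemma rmk_le {a b : ResTerm} : rmk a ≤ rmk b ↔ RDer a b := Iff.rfl

instance : Lattice RQ where
  sup := Quotient.map₂ .rjoin (fun _ _ ha _ _ hb =>
    ⟨.join_le (ha.1.trans (.le_join_left _ _)) (hb.1.trans (.le_join_right _ _)),
     .join_le (ha.2.trans (.le_join_left _ _)) (hb.2.trans (.le_join_right _ _))⟩)
  inf := Quotient.map₂ .rmeet (fun _ _ ha _ _ hb =>
    ⟨.le_meet ((RDer.meet_le_left _ _).trans ha.1) ((RDer.meet_le_right _ _).trans hb.1),
     .le_meet ((RDer.meet_le_left _ _).trans ha.2) ((RDer.meet_le_right _ _).trans hb.2)⟩)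
  le_sup_left := fun q₁ q₂ => Quotient.inductionOn₂ q₁ q₂
    (fun a b => RDer.le_join_left a b)
  le_sup_right := fun q₁ q₂ => Quotient.inductionOn₂ q₁ q₂
    (fun a b => RDer.le_join_right a b)
  sup_le := fun q₁ q₂ q₃ => Quotient.inductionOn₃ q₁ q₂ q₃
    (fun _ _ _ h₁ h₂ => RDer.join_le h₁ h₂)
  inf_le_left := fun q₁ q₂ => Quotient.inductionOn₂ q₁ q₂
    (fun a b => RDer.meet_le_left a b)
  inf_le_right := fun q₁ q₂ => Quotient.inductionOn₂ q₁ q₂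
    (fun a b => RDer.meet_le_right a b)
  le_inf := fun q₁ q₂ q₃ => Quotient.inductionOn₃ q₁ q₂ q₃
    (fun _ _ _ h₁ h₂ => RDer.le_meet h₁ h₂)

instance : DistribLattice RQ :=
  DistribLattice.ofInfSupLe (fun q₁ q₂ q₃ => Quotient.inductionOn₃ q₁ q₂ q₃
    (fun a b c => RDer.distrib a b c))

instance : BoundedOrder RQ where
  top := rmk .one
  bot := rmk .zero
  le_top := fun q => Quotient.inductionOn q fun a => RDer.le_one a
  bot_le := fun q => Quotient.inductionOn q fun a => RDer.zero_le a

lemma rtop_def : (⊤ : RQ) = rmk .one := rfl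
lemma rbot_def : (⊥ : RQ) = rmk .zero := rfl
lemma rsup_mk (a b : ResTerm) : rmk a ⊔ rmk b = rmk (.rjoin a b) := rfl
lemma rinf_mk (a b : ResTerm) : rmk a ⊓ rmk b = rmk (.rmeet a b) := rfl

/-! ### Order on the formula quotient -/

instance : PartialOrder FQ where
  le := Quotient.lift₂ FDer (fun _ _ _ _ h₁ h₂ => propext
    ⟨fun h => h₁.2.trans (h.trans h₂.1), fun h => h₁.1.trans (h.trans h₂.2)⟩)
  le_refl := fun q => Quotient.inductionOn q fun a => FDer.refl a
  le_trans := fun q₁ q₂ q₃ => Quotient.inductionOn₃ q₁ q₂ q₃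
    (fun _ _ _ h₁ h₂ => FDer.trans h₁ h₂)
  le_antisymm := fun q₁ q₂ => Quotient.inductionOn₂ q₁ q₂
    (fun _ _ h₁ h₂ => Quotient.sound ⟨h₁, h₂⟩)

lemma fmk_le {a b : FmTerm} : fmk a ≤ fmk b ↔ FDer a b := Iff.rfl

instance : Lattice FQ where
  sup := Quotient.map₂ .or (fun _ _ ha _ _ hb =>
    ⟨.or_le (ha.1.trans (.le_or_left _ _)) (hb.1.trans (.le_or_right _ _)),
     .or_le (ha.2.trans (.le_or_left _ _)) (hb.2.trans (.le_or_right _ _))⟩)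
  inf := Quotient.map₂ .and (fun _ _ ha _ _ hb =>
    ⟨.le_and ((FDer.and_le_left _ _).trans ha.1) ((FDer.and_le_right _ _).trans hb.1),
     .le_and ((FDer.and_le_left _ _).trans ha.2) ((FDer.and_le_right _ _).trans hb.2)⟩)
  le_sup_left := fun q₁ q₂ => Quotient.inductionOn₂ q₁ q₂
    (fun a b => FDer.le_or_left a b)
  le_sup_right := fun q₁ q₂ => Quotient.inductionOn₂ q₁ q₂
    (fun a b => FDer.le_or_right a b)
  sup_le := fun q₁ q₂ q₃ => Quotient.inductionOn₃ q₁ q₂ q₃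
    (fun _ _ _ h₁ h₂ => FDer.or_le h₁ h₂)
  inf_le_left := fun q₁ q₂ => Quotient.inductionOn₂ q₁ q₂
    (fun a b => FDer.and_le_left a b)
  inf_le_right := fun q₁ q₂ => Quotient.inductionOn₂ q₁ q₂
    (fun a b => FDer.and_le_right a b)
  le_inf := fun q₁ q₂ q₃ => Quotient.inductionOn₃ q₁ q₂ q₃
    (fun _ _ _ h₁ h₂ => FDer.le_and h₁ h₂)

lemma fder_distrib (A B C : FmTerm) :
    FDer (.and A (.or B C)) (.or (.and A B) (.and A C)) := by
  have hB : FDer (.and B A) (.or (.and A B) (.and A C)) :=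
    (FDer.le_and (.and_le_right _ _) (.and_le_left _ _)).trans (.le_or_left _ _)
  have hC : FDer (.and C A) (.or (.and A B) (.and A C)) :=
    (FDer.le_and (.and_le_right _ _) (.and_le_left _ _)).trans (.le_or_right _ _)
  have h1 : FDer (.or B C) (.imp A (.or (.and A B) (.and A C))) :=
    .or_le (.imp_intro hB) (.imp_intro hC)
  exact (FDer.le_and (.and_le_right _ _) (.and_le_left _ _)).trans (.imp_elim h1)

instance : DistribLattice FQ :=
  DistribLattice.ofInfSupLe (fun q₁ q₂ q₃ => Quotient.inductionOn₃ q₁ q₂ q₃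
    (fun a b c => fder_distrib a b c))

instance : BoundedOrder FQ where
  top := fmk .top
  bot := fmk .bot
  le_top := fun q => Quotient.inductionOn q fun a => FDer.le_top a
  bot_le := fun q => Quotient.inductionOn q fun a => FDer.bot_le a

lemma ftop_def : (⊤ : FQ) = fmk .top := rfl
lemma fbot_def : (⊥ : FQ) = fmk .bot := rfl
lemma fsup_mk (a b : FmTerm) : fmk a ⊔ fmk b = fmk (.or a b) := rfl
lemma finf_mk (a b : FmTerm) : fmk a ⊓ fmk b = fmk (.and a b) := rfl

def fhimp : FQ → FQ → FQ :=
  Quotient.map₂ .imp (fun a₁ a₂ ha b₁ b₂ hb => by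
    have key : ∀ (a a' b b' : FmTerm), FDer a' a → FDer b b' →
        FDer (.imp a b) (.imp a' b') := fun a a' b b' h₁ h₂ =>
      .imp_intro (((FDer.le_and (.and_le_left _ _)
        ((FDer.and_le_right _ _).trans h₁)).trans
          (.imp_elim (.refl _))).trans h₂)
    exact ⟨key _ _ _ _ ha.2 hb.1, key _ _ _ _ ha.1 hb.2⟩)

instance : HeytingAlgebra FQ :=
  HeytingAlgebra.ofHImp fhimp (fun q₁ q₂ q₃ => Quotient.inductionOn₃ q₁ q₂ q₃
    (fun _ _ _ => ⟨fun h => FDer.imp_elim h, fun h => FDer.imp_intro h⟩))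

lemma fhimp_mk (a b : FmTerm) : fmk a ⇨ fmk b = fmk (.imp a b) := rfl

/-! ### The Lindenbaum LRC-algebra -/

def alg : LRCAlgebra FQ RQ where
  mul := Quotient.map₂ .mul (fun _ _ ha _ _ hb =>
    ⟨(RDer.mul_mono_left _ ha.1).trans (RDer.mul_mono_right _ hb.1),
     (RDer.mul_mono_left _ ha.2).trans (RDer.mul_mono_right _ hb.2)⟩)
  mul_assoc := fun q₁ q₂ q₃ => Quotient.inductionOn₃ q₁ q₂ q₃
    (fun a b c => Quotient.sound ⟨.mul_assoc₁ a b c, .mul_assoc₂ a b c⟩)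
  mul_top := fun q => Quotient.inductionOn q
    (fun a => Quotient.sound ⟨.mul_one₁ a, .mul_one₂ a⟩)
  top_mul := fun q => Quotient.inductionOn q
    (fun a => Quotient.sound ⟨.one_mul₁ a, .one_mul₂ a⟩)
  mul_sup_left := fun q₁ q₂ q₃ => Quotient.inductionOn₃ q₁ q₂ q₃
    (fun a b c => Quotient.sound
      ⟨.mul_join_right c a b,
       .join_le (.mul_mono_left c (.le_join_left a b))
                (.mul_mono_left c (.le_join_right a b))⟩)
  mul_sup_right := fun q₁ q₂ q₃ => Quotient.inductionOn₃ q₁ q₂ q₃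
    (fun a b c => Quotient.sound
      ⟨.mul_join_left a b c,
       .join_le (.mul_mono_right a (.le_join_left b c))
                (.mul_mono_right a (.le_join_right b c))⟩)
  mul_bot_left := fun q => Quotient.inductionOn q
    (fun a => Quotient.sound
      ⟨(RDer.mul_mono_right _ (.le_one a)).trans (.mul_one₁ _), .zero_le _⟩)
  mul_bot_right := fun q => Quotient.inductionOn q
    (fun a => Quotient.sound
      ⟨(RDer.mul_mono_left _ (.le_one a)).trans (.one_mul₁ _), .zero_le _⟩)
  dia := Quotient.map .dia (fun _ _ ha => ⟨.md ha.1, .md ha.2⟩)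
  dia_bot := Quotient.sound ⟨.d2, .bot_le _⟩
  dia_sup := fun q₁ q₂ => Quotient.inductionOn₂ q₁ q₂
    (fun a b => Quotient.sound ⟨.d1₁ a b, .d1₂ a b⟩)
  diaR := Quotient.map .diaR (fun _ _ ha => ⟨.mdr ha.1, .mdr ha.2⟩)
  diaR_bot := Quotient.sound ⟨.d4, .bot_le _⟩
  diaR_sup := fun q₁ q₂ => Quotient.inductionOn₂ q₁ q₂
    (fun a b => Quotient.sound ⟨.d3₁ a b, .d3₂ a b⟩)
  box := Quotient.map₂ .box (fun _ _ ha _ _ hb =>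
    ⟨(FDer.ab _ ha.2).trans (.mb _ hb.1), (FDer.ab _ ha.1).trans (.mb _ hb.2)⟩)
  box_sup := fun q₁ q₂ q₃ => Quotient.inductionOn₃ q₁ q₂ q₃
    (fun a b c => Quotient.sound ⟨.b1₁ a b c, .b1₂ a b c⟩)
  box_bot := fun q => Quotient.inductionOn q
    (fun a => Quotient.sound ⟨.le_top _, .b2 a⟩)
  box_mono := fun q {q₁ q₂} h => by
    induction q using Quotient.inductionOn with
    | h a =>
      induction q₁ using Quotient.inductionOn with
      | h b =>
        induction q₂ using Quotient.inductionOn with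
        | h c => exact FDer.mb a h
  boxR := Quotient.map₂ .boxR (fun _ _ ha _ _ hb =>
    ⟨(FDer.abr _ ha.2).trans (.mbr _ hb.1), (FDer.abr _ ha.1).trans (.mbr _ hb.2)⟩)
  boxR_sup := fun q₁ q₂ q₃ => Quotient.inductionOn₃ q₁ q₂ q₃
    (fun a b c => Quotient.sound ⟨.b4₁ a b c, .b4₂ a b c⟩)
  boxR_bot := fun q => Quotient.inductionOn q
    (fun a => Quotient.sound ⟨.le_top _, .b5 a⟩)
  boxR_inf := fun q₁ q₂ q₃ => Quotient.inductionOn₃ q₁ q₂ q₃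
    (fun a b c => Quotient.sound ⟨.b6₁ a b c, .b6₂ a b c⟩)
  boxR_top := fun q => Quotient.inductionOn q
    (fun a => Quotient.sound ⟨.le_top _, .b7 a⟩)
  b3 := fun q₁ q₂ q₃ => Quotient.inductionOn₃ q₁ q₂ q₃
    (fun a b c => FDer.b3 a b c)
  bd1 := fun q₁ q₂ => Quotient.inductionOn₂ q₁ q₂
    (fun a b => FDer.bd1 a b)
  bd2 := fun q₁ q₂ => Quotient.inductionOn₂ q₁ q₂
    (fun a b => FDer.bd2 a b)

/-! ### Interpretation in the Lindenbaum algebra -/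

lemma interpR_eq (t : ResTerm) :
    t.interp alg (fun n => rmk (.atom n)) = rmk t := by
  induction t with
  | atom n => rfl
  | one => rfl
  | zero => rfl
  | mul a b iha ihb => simp only [ResTerm.interp, iha, ihb]; rfl
  | rjoin a b iha ihb => simp only [ResTerm.interp, iha, ihb]; rfl
  | rmeet a b iha ihb => simp only [ResTerm.interp, iha, ihb]; rfl

lemma interpF_eq (t : FmTerm) :
    t.interp alg (fun n => fmk (.atom n)) (fun n => rmk (.atom n)) = fmk t := by
  induction t with
  | atom n => rfl
  | top => rfl
  | bot => rfl
  | or a b iha ihb => simp only [FmTerm.interp, iha, ihb]; rfl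
  | and a b iha ihb => simp only [FmTerm.interp, iha, ihb]; rfl
  | imp a b iha ihb => simp only [FmTerm.interp, iha, ihb]; rfl
  | box α a iha => simp only [FmTerm.interp, interpR_eq, iha]; rfl
  | dia a iha => simp only [FmTerm.interp, iha]; rfl
  | diaR α => simp only [FmTerm.interp, interpR_eq]; rfl
  | boxR α β => simp only [FmTerm.interp, interpR_eq]; rfl

end LRCLind

/-! ## Statement 0: algebraic completeness of LRC -/

/-- **Algebraic completeness of LRC**: if `B` is not derivable from `A` in the
Hilbert system H.LRC, then there is an algebraic LRC-model
`M = (F, vF, vR)` in which `v_Fm(A) ≰ v_Fm(B)`. -/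
theorem lrc_algebraic_completeness (A B : FmTerm) (h : ¬ FDer A B) :
    ∃ (W R : Type) (iW : HeytingAlgebra W) (iR : DistribLattice R),
      letI := iW
      letI := iR
      ∃ iB : BoundedOrder R,
        letI := iB
        ∃ (F : LRCAlgebra W R) (vF : ℕ → W) (vR : ℕ → R),
          ¬ FmTerm.interp F vF vR A ≤ FmTerm.interp F vF vR B := by
  refine ⟨LRCLind.FQ, LRCLind.RQ, inferInstance, inferInstance, inferInstance,
    LRCLind.alg, fun n => LRCLind.fmk (.atom n), fun n => LRCLind.rmk (.atom n), ?_⟩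
  rw [LRCLind.interpF_eq, LRCLind.interpF_eq]
  exact fun hle => h hle
end

section
/- Canonicity of LRC: for any heterogeneous LRC-algebra F = (A, Q, ▷, ◇, ▷', ◇'), and any canonical extensions A^δ of A and Q^δ of Q, the structure F^δ = (A^δ, Q^δ, ▷^π, ◇^σ, ▷'^π, ◇'^σ), where the extended operations are defined via closed and open elements as specified, is a perfect heterogeneous LRC-algebra; in particular, all the defining axioms of heterogeneous LRC-algebras (including B3, BD1 and BD2) remain valid for the extended operations on A^δ and Q^δ, and the extended operations satisfy the infinitary versions of the join- and meet-preservation properties. -/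
/-! ## Canonical extensions of bounded distributive lattices -/

/-- A *canonical extension* of a bounded distributive lattice `L` is a
complete (distributive) lattice `Lδ` containing `L` as a bounded sublattice
(via the embedding `e`) such that (denseness) every element of `Lδ` is both a
join of closed elements (meets of elements of `L`) and a meet of open elements
(joins of elements of `L`), and (compactness) whenever `⋀ e '' S ≤ ⋁ e '' T`
there are finite `F ⊆ S`, `G ⊆ T` with `⋀ e '' F ≤ ⋁ e '' G`. -/
structure CanonicalExtension (L : Type*) [DistribLattice L] [OrderBot L]
    [OrderTop L] (Lδ : Type*) [CompleteLattice Lδ] where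
  e : L → Lδ
  inj : Function.Injective e
  map_sup : ∀ a b, e (a ⊔ b) = e a ⊔ e b
  map_inf : ∀ a b, e (a ⊓ b) = e a ⊓ e b
  map_bot : e ⊥ = ⊥
  map_top : e ⊤ = ⊤
  dense_closed : ∀ u : Lδ,
    u = sSup {k | (∃ S : Set L, k = sInf (e '' S)) ∧ k ≤ u}
  dense_open : ∀ u : Lδ,
    u = sInf {o | (∃ S : Set L, o = sSup (e '' S)) ∧ u ≤ o}
  compact : ∀ S T : Set L, sInf (e '' S) ≤ sSup (e '' T) →
    ∃ Fs Gs : Finset L, ↑Fs ⊆ S ∧ ↑Gs ⊆ T ∧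
      sInf (e '' ↑Fs) ≤ sSup (e '' ↑Gs)

namespace CanonicalExtension

variable {L : Type*} [DistribLattice L] [OrderBot L] [OrderTop L]
  {Lδ : Type*} [CompleteLattice Lδ]

/-- An element of `Lδ` is *closed* if it is a meet of elements of `L`. -/
def IsClosed (C : CanonicalExtension L Lδ) (k : Lδ) : Prop :=
  ∃ S : Set L, k = sInf (C.e '' S)

/-- An element of `Lδ` is *open* if it is a join of elements of `L`. -/
def IsOpen (C : CanonicalExtension L Lδ) (o : Lδ) : Prop :=
  ∃ S : Set L, o = sSup (C.e '' S)

end CanonicalExtension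

/-! ## The σ- and π-extensions of the operations of a heterogeneous
LRC-algebra to the canonical extensions -/

section Extensions

variable {W R : Type*} [HeytingAlgebra W] [DistribLattice R] [BoundedOrder R]
  {Wδ Rδ : Type*} [CompletelyDistribLattice Wδ] [CompletelyDistribLattice Rδ]
  (F : LRCAlgebra W R)
  (CW : CanonicalExtension W Wδ) (CR : CanonicalExtension R Rδ)

/-- `◇^σ`: for closed `k`, `◇^σ k = ⋀{◇a : a ∈ W, k ≤ a}`, and for arbitrary
`u`, `◇^σ u = ⋁{◇^σ k : k closed, k ≤ u}`. -/
noncomputable def diaSigma (u : Wδ) : Wδ :=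
  ⨆ k : {k : Wδ // CW.IsClosed k ∧ k ≤ u},
    ⨅ a : {a : W // k.1 ≤ CW.e a}, CW.e (F.dia a.1)

/-- `◇'^σ`: for closed `κ`, `◇'^σ κ = ⋀{◇'α : α ∈ R, κ ≤ α}`, and for
arbitrary `q`, `◇'^σ q = ⋁{◇'^σ κ : κ closed, κ ≤ q}`. -/
noncomputable def diaRSigma (q : Rδ) : Wδ :=
  ⨆ κ : {κ : Rδ // CR.IsClosed κ ∧ κ ≤ q},
    ⨅ α : {α : R // κ.1 ≤ CR.e α}, CW.e (F.diaR α.1)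

/-- `κ ▷^π o` for `κ ∈ K(Rδ)`, `o ∈ O(Wδ)`:
`⋁{α ▷ a : a ∈ W, a ≤ o, α ∈ R, κ ≤ α}`. -/
noncomputable def boxPiKO (κ : Rδ) (o : Wδ) : Wδ :=
  ⨆ p : {p : R × W // CW.e p.2 ≤ o ∧ κ ≤ CR.e p.1}, CW.e (F.box p.1.1 p.1.2)

/-- `▷^π`: `q ▷^π u = ⋀{κ ▷^π o : o open, u ≤ o, κ closed, κ ≤ q}`. -/
noncomputable def boxPi (q : Rδ) (u : Wδ) : Wδ :=
  ⨅ x : {x : Rδ × Wδ // CW.IsOpen x.2 ∧ u ≤ x.2 ∧ CR.IsClosed x.1 ∧ x.1 ≤ q},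
    boxPiKO F CW CR x.1.1 x.1.2

/-- `κ ▷'^π ω` for `κ ∈ K(Rδ)`, `ω ∈ O(Rδ)`:
`⋁{α ▷' β : β ∈ R, β ≤ ω, α ∈ R, κ ≤ α}`. -/
noncomputable def boxRPiKO (κ ω : Rδ) : Wδ :=
  ⨆ p : {p : R × R // CR.e p.2 ≤ ω ∧ κ ≤ CR.e p.1}, CW.e (F.boxR p.1.1 p.1.2)

/-- `▷'^π`: `q ▷'^π w = ⋀{κ ▷'^π ω : ω open, w ≤ ω, κ closed, κ ≤ q}`. -/
noncomputable def boxRPi (q w : Rδ) : Wδ :=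
  ⨅ x : {x : Rδ × Rδ // CR.IsOpen x.2 ∧ w ≤ x.2 ∧ CR.IsClosed x.1 ∧ x.1 ≤ q},
    boxRPiKO F CW CR x.1.1 x.1.2

/-- `κ₁ ·^σ κ₂` for closed `κ₁, κ₂`: `⋀{α·β : α, β ∈ R, κ₁ ≤ α, κ₂ ≤ β}`. -/
noncomputable def mulSigmaKK (κ₁ κ₂ : Rδ) : Rδ :=
  ⨅ p : {p : R × R // κ₁ ≤ CR.e p.1 ∧ κ₂ ≤ CR.e p.2}, CR.e (F.mul p.1.1 p.1.2)

/-- `·^σ`: `q₁ ·^σ q₂ = ⋁{κ₁ ·^σ κ₂ : κ₁, κ₂ closed, κ₁ ≤ q₁, κ₂ ≤ q₂}`. -/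
noncomputable def mulSigma (q₁ q₂ : Rδ) : Rδ :=
  ⨆ p : {p : Rδ × Rδ // CR.IsClosed p.1 ∧ CR.IsClosed p.2 ∧
      p.1 ≤ q₁ ∧ p.2 ≤ q₂}, mulSigmaKK F CR p.1.1 p.1.2

end Extensions

/-! ## Perfect lattices -/

/-- An element `j` of a complete lattice is completely join-irreducible if
whenever `j = ⋁ S` then `j ∈ S`. -/
def CJIrred {L : Type*} [CompleteLattice L] (j : L) : Prop :=
  ∀ S : Set L, j = sSup S → j ∈ S

/-- A complete lattice is completely join-generated by its completely
join-irreducible elements. -/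
def JoinGeneratedByCJIrred (L : Type*) [CompleteLattice L] : Prop :=
  ∀ u : L, u = sSup {j | CJIrred j ∧ j ≤ u}

namespace CanonicalExtension

section Compactness

variable {L : Type*} [DistribLattice L] [OrderBot L] [OrderTop L]
  {Lδ : Type*} [CompleteLattice Lδ] (C : CanonicalExtension L Lδ)

theorem e_mono : Monotone C.e := fun a b h => by
  rw [← sup_eq_right.2 h, C.map_sup]; exact le_sup_left

theorem e_le_e {a b : L} : C.e a ≤ C.e b ↔ a ≤ b := by
  refine ⟨fun h => ?_, fun h => C.e_mono h⟩
  rw [← inf_eq_left, ← C.map_inf] at h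
  exact inf_eq_left.1 (C.inj h)

variable {C}

theorem IsClosed.eq_iInf {k : Lδ} (hk : C.IsClosed k) :
    k = ⨅ a : {a : L // k ≤ C.e a}, C.e a.1 := by
  obtain ⟨S, rfl⟩ := hk
  refine le_antisymm (le_iInf fun a => a.2) (le_sInf ?_)
  rintro _ ⟨a, ha, rfl⟩
  exact iInf_le_of_le ⟨a, sInf_le ⟨a, ha, rfl⟩⟩ le_rfl

theorem IsOpen.eq_iSup {o : Lδ} (ho : C.IsOpen o) :
    o = ⨆ a : {a : L // C.e a ≤ o}, C.e a.1 := by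
  obtain ⟨S, rfl⟩ := ho
  refine le_antisymm (sSup_le ?_) (iSup_le fun a => a.2)
  rintro _ ⟨a, ha, rfl⟩
  exact le_iSup_of_le ⟨a, le_sSup ⟨a, ha, rfl⟩⟩ le_rfl

theorem IsClosed.eq_of_forall_le_e_iff {k k' : Lδ} (hk : C.IsClosed k) (hk' : C.IsClosed k')
    (h : ∀ a, k ≤ C.e a ↔ k' ≤ C.e a) : k = k' := by
  rw [hk.eq_iInf, hk'.eq_iInf]
  exact le_antisymm (le_iInf fun a => iInf_le_of_le ⟨a.1, (h a.1).2 a.2⟩ le_rfl)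
    (le_iInf fun a => iInf_le_of_le ⟨a.1, (h a.1).1 a.2⟩ le_rfl)

variable (C)

theorem isClosed_iInf {ι : Sort*} (f : ι → L) : C.IsClosed (⨅ i, C.e (f i)) :=
  ⟨Set.range f, by rw [← Set.range_comp, sInf_range]; rfl⟩

theorem isOpen_iSup {ι : Sort*} (f : ι → L) : C.IsOpen (⨆ i, C.e (f i)) :=
  ⟨Set.range f, by rw [← Set.range_comp, sSup_range]; rfl⟩

theorem isClosed_e (a : L) : C.IsClosed (C.e a) := ⟨{a}, by simp⟩

theorem isOpen_e (a : L) : C.IsOpen (C.e a) := ⟨{a}, by simp⟩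

theorem isClosed_top : C.IsClosed (⊤ : Lδ) := ⟨∅, by simp⟩

theorem le_of_forall_isClosed_le {u v : Lδ} (h : ∀ k, C.IsClosed k → k ≤ u → k ≤ v) :
    u ≤ v := by
  rw [C.dense_closed u]
  exact sSup_le fun k hk => h k hk.1 hk.2

theorem le_of_forall_le_isOpen {u v : Lδ} (h : ∀ o, C.IsOpen o → v ≤ o → u ≤ o) :
    u ≤ v := by
  rw [C.dense_open v]
  exact le_sInf fun o ho => h o ho.1 ho.2

theorem directed_ge_val_le_e (k : Lδ) :
    Directed (· ≥ ·) fun a : {a : L // k ≤ C.e a} => a.1 := fun a b =>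
  ⟨⟨a.1 ⊓ b.1, by rw [C.map_inf]; exact le_inf a.2 b.2⟩, inf_le_left, inf_le_right⟩

theorem directed_le_val_e_le (o : Lδ) :
    Directed (· ≤ ·) fun a : {a : L // C.e a ≤ o} => a.1 := fun a b =>
  ⟨⟨a.1 ⊔ b.1, by rw [C.map_sup]; exact sup_le a.2 b.2⟩, le_sup_left, le_sup_right⟩

instance (k : Lδ) : Nonempty {a : L // k ≤ C.e a} := ⟨⟨⊤, by rw [C.map_top]; exact le_top⟩⟩

instance (o : Lδ) : Nonempty {a : L // C.e a ≤ o} := ⟨⟨⊥, by rw [C.map_bot]; exact bot_le⟩⟩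

theorem exists_le_of_iInf_le_iSup {ι κ : Type*} [Nonempty ι] [Nonempty κ] {f : ι → L}
    {g : κ → L} (hf : Directed (· ≥ ·) f) (hg : Directed (· ≤ ·) g)
    (h : ⨅ i, C.e (f i) ≤ ⨆ j, C.e (g j)) : ∃ i j, f i ≤ g j := by
  classical
  obtain ⟨Fs, Gs, hF, hG, hle⟩ := C.compact (Set.range f) (Set.range g) (by
    rw [← Set.range_comp, ← Set.range_comp, sInf_range, sSup_range]; exact h)
  rw [← Set.image_univ, Finset.subset_set_image_iff] at hF hG
  obtain ⟨s, -, rfl⟩ := hF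
  obtain ⟨t, -, rfl⟩ := hG
  obtain ⟨i, hi⟩ := hf.finset_le s
  obtain ⟨j, hj⟩ := hg.finset_le t
  refine ⟨i, j, C.e_le_e.1 ?_⟩
  calc C.e (f i) ≤ sInf (C.e '' ↑(s.image f)) := by
        simpa using fun a ha => C.e_mono (hi a ha)
    _ ≤ sSup (C.e '' ↑(t.image g)) := hle
    _ ≤ C.e (g j) := by simpa using fun a ha => C.e_mono (hj a ha)

variable {C}

theorem IsClosed.exists_le_of_le_iSup {k : Lδ} (hk : C.IsClosed k) {κ : Type*} [Nonempty κ]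
    {g : κ → L} (hg : Directed (· ≤ ·) g) (h : k ≤ ⨆ j, C.e (g j)) : ∃ j, k ≤ C.e (g j) := by
  rw [hk.eq_iInf] at h ⊢
  obtain ⟨a, j, haj⟩ := C.exists_le_of_iInf_le_iSup (C.directed_ge_val_le_e k) hg h
  exact ⟨j, iInf_le_of_le a (C.e_mono haj)⟩

theorem IsOpen.exists_le_of_iInf_le {o : Lδ} (ho : C.IsOpen o) {ι : Type*} [Nonempty ι]
    {f : ι → L} (hf : Directed (· ≥ ·) f) (h : ⨅ i, C.e (f i) ≤ o) : ∃ i, C.e (f i) ≤ o := by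
  rw [ho.eq_iSup] at h ⊢
  obtain ⟨i, a, hia⟩ := C.exists_le_of_iInf_le_iSup hf (C.directed_le_val_e_le o) h
  exact ⟨i, le_iSup_of_le a (C.e_mono hia)⟩

end Compactness

section Perfect

variable {L : Type*} [DistribLattice L] [OrderBot L] [OrderTop L]
  {Lδ : Type*} [CompleteLattice Lδ] (C : CanonicalExtension L Lδ)

open Order

def idealBelow (o : Lδ) : Ideal L where
  carrier := {a | C.e a ≤ o}
  lower' _ _ hab h := (C.e_mono hab).trans h
  nonempty' := ⟨⊥, show C.e ⊥ ≤ o by rw [C.map_bot]; exact bot_le⟩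
  directed' a ha b hb :=
    ⟨a ⊔ b, show C.e (a ⊔ b) ≤ o by rw [C.map_sup]; exact sup_le ha hb, le_sup_left, le_sup_right⟩

def filterAbove (k : Lδ) : PFilter L :=
  IsPFilter.toPFilter (F := {a | k ≤ C.e a}) <|
    IsPFilter.of_def ⟨⊤, show k ≤ C.e ⊤ by rw [C.map_top]; exact le_top⟩
      (fun a ha b hb => ⟨a ⊓ b, show k ≤ C.e (a ⊓ b) by rw [C.map_inf]; exact le_inf ha hb,
        inf_le_left, inf_le_right⟩)
      fun hab h => h.trans (C.e_mono hab)

def meetCompl (J : Ideal L) : Lδ := ⨅ a : {a : L // a ∉ J}, C.e a.1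

variable {C} {J : Ideal L} [hJ : J.IsPrime]

instance : Nonempty {a : L // a ∉ J} := ⟨⟨⊤, Ideal.IsProper.top_notMem hJ.toIsProper⟩⟩

theorem meetCompl_le_e_iff {a : L} : C.meetCompl J ≤ C.e a ↔ a ∉ J := by
  refine ⟨fun h => ?_, fun h => iInf_le_of_le ⟨a, h⟩ le_rfl⟩
  have hdir : Directed (· ≥ ·) fun b : {b : L // b ∉ J} => b.1 := fun b c =>
    ⟨⟨b.1 ⊓ c.1, fun h => (hJ.mem_or_mem h).elim b.2 c.2⟩, inf_le_left, inf_le_right⟩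
  obtain ⟨b, hb⟩ := (C.isOpen_iSup fun _ : Unit => a).exists_le_of_iInf_le hdir
    (h.trans (le_iSup (fun _ : Unit => C.e a) ()))
  exact fun ha => b.2 (J.lower (C.e_le_e.1 (hb.trans iSup_const.le)) ha)

theorem exists_notMem_of_meetCompl_le_iSup {ι : Type*} {g : ι → L}
    (h : C.meetCompl J ≤ ⨆ i, C.e (g i)) : ∃ i, g i ∉ J := by
  classical
  have hsup : ⨆ i, C.e (g i) ≤ ⨆ s : Finset ι, C.e (s.sup g) :=
    iSup_le fun i => le_iSup_of_le {i} (by simp)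
  obtain ⟨s, hs⟩ := (C.isClosed_iInf _).exists_le_of_le_iSup
    (fun s t => ⟨s ∪ t, Finset.sup_mono Finset.subset_union_left,
      Finset.sup_mono Finset.subset_union_right⟩) (h.trans hsup)
  obtain ⟨i, -, hi⟩ := not_forall₂.1 (mt (J.finsetSup_mem_iff).2 (meetCompl_le_e_iff.1 hs))
  exact ⟨i, hi⟩

theorem cjirred_meetCompl : CJIrred (C.meetCompl J) := by
  intro S hS
  suffices ∃ s ∈ S, C.meetCompl J ≤ s by
    obtain ⟨s, hs, hle⟩ := this
    rwa [le_antisymm hle ((le_sSup hs).trans hS.ge)]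
  by_contra! hS'
  have hST : sSup S ≤ ⨆ a : {a : L // a ∈ J}, C.e a.1 := by
    refine sSup_le fun s hs => ?_
    obtain ⟨o, ho, hso, hjo⟩ : ∃ o, C.IsOpen o ∧ s ≤ o ∧ ¬C.meetCompl J ≤ o := by
      by_contra! h
      exact hS' s hs (C.le_of_forall_le_isOpen fun o ho hso => h o ho hso)
    refine hso.trans (ho.eq_iSup.le.trans (iSup_le fun a => le_iSup_of_le ⟨a.1, ?_⟩ le_rfl))
    by_contra ha
    exact hjo ((meetCompl_le_e_iff.2 ha).trans a.2)
  obtain ⟨a, ha⟩ := exists_notMem_of_meetCompl_le_iSup (hS.le.trans hST)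
  exact ha a.2

theorem joinGeneratedByCJIrred (C : CanonicalExtension L Lδ) : JoinGeneratedByCJIrred Lδ := by
  intro u
  refine le_antisymm ?_ (sSup_le fun j hj => hj.2)
  refine C.le_of_forall_isClosed_le fun k hk hku => C.le_of_forall_le_isOpen fun o ho hvo => ?_
  by_contra hko
  obtain ⟨J, hJ, hoJ, hkJ⟩ := DistribLattice.prime_ideal_of_disjoint_filter_ideal
    (F := C.filterAbove k) (I := C.idealBelow o)
    (Set.disjoint_left.2 fun a hka hao => hko (hka.trans hao))
  have hjk : C.meetCompl J ≤ k := by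
    rw [hk.eq_iInf]
    exact le_iInf fun a => iInf_le_of_le ⟨a.1, Set.disjoint_left.1 hkJ a.2⟩ le_rfl
  have hjo : C.meetCompl J ≤ ⨆ a : {a : L // C.e a ≤ o}, C.e a.1 := by
    rw [← ho.eq_iSup]
    exact (le_sSup (show C.meetCompl J ∈ {j | CJIrred j ∧ j ≤ u} from
      ⟨cjirred_meetCompl, hjk.trans hku⟩)).trans hvo
  obtain ⟨a, ha⟩ := exists_notMem_of_meetCompl_le_iSup hjo
  exact ha (hoJ a.2)

end Perfect

section Sigma

variable {L M : Type*} [DistribLattice L] [OrderBot L] [OrderTop L]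
  [DistribLattice M] [OrderBot M] [OrderTop M] {Lδ Mδ : Type*} [CompleteLattice Lδ]
  [CompleteLattice Mδ] (C : CanonicalExtension L Lδ) (D : CanonicalExtension M Mδ)

def sigmaClosed (f : L → M) (k : Lδ) : Mδ :=
  ⨅ a : {a : L // k ≤ C.e a}, D.e (f a.1)

def sigma (f : L → M) (u : Lδ) : Mδ :=
  ⨆ k : {k : Lδ // C.IsClosed k ∧ k ≤ u}, C.sigmaClosed D f k.1

variable {C D}

theorem sigmaClosed_le_e {f : L → M} {k : Lδ} {a : L} (h : k ≤ C.e a) :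
    C.sigmaClosed D f k ≤ D.e (f a) :=
  iInf_le_of_le ⟨a, h⟩ le_rfl

theorem sigmaClosed_e {f : L → M} (hf : Monotone f) (a : L) :
    C.sigmaClosed D f (C.e a) = D.e (f a) :=
  le_antisymm (sigmaClosed_le_e le_rfl) (le_iInf fun b => D.e_mono (hf (C.e_le_e.1 b.2)))

theorem sigmaClosed_le_sigma {f : L → M} {k u : Lδ} (hk : C.IsClosed k) (hku : k ≤ u) :
    C.sigmaClosed D f k ≤ C.sigma D f u :=
  le_iSup_of_le ⟨k, hk, hku⟩ le_rfl

theorem sigma_le {f : L → M} {u : Mδ} {v : Lδ}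
    (h : ∀ k, C.IsClosed k → k ≤ v → C.sigmaClosed D f k ≤ u) : C.sigma D f v ≤ u :=
  iSup_le fun k => h k.1 k.2.1 k.2.2

theorem sigma_mono (f : L → M) : Monotone (C.sigma D f) := fun _ _ huv =>
  sigma_le fun _ hk hku => sigmaClosed_le_sigma hk (hku.trans huv)

theorem le_iSup_of_sigma_le {f : L → M} (hf : Monotone f) {u : Lδ} {O : Mδ} (hO : D.IsOpen O)
    (h : C.sigma D f u ≤ O) : u ≤ ⨆ x : {x : L // D.e (f x) ≤ O}, C.e x.1 := by
  refine C.le_of_forall_isClosed_le fun k hk hku => ?_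
  have hdir : Directed (· ≥ ·) fun a : {a : L // k ≤ C.e a} => f a.1 := fun a b =>
    ⟨⟨a.1 ⊓ b.1, by rw [C.map_inf]; exact le_inf a.2 b.2⟩, hf inf_le_left, hf inf_le_right⟩
  obtain ⟨a, ha⟩ := hO.exists_le_of_iInf_le hdir ((sigmaClosed_le_sigma hk hku).trans h)
  exact a.2.trans (le_iSup_of_le ⟨a.1, ha⟩ le_rfl)

theorem sigmaClosed_le_of_le_iSup (f : SupBotHom L M) {k : Lδ} {O : Mδ} (hk : C.IsClosed k)
    (h : k ≤ ⨆ x : {x : L // D.e (f x) ≤ O}, C.e x.1) : C.sigmaClosed D f k ≤ O := by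
  have : Nonempty {x : L // D.e (f x) ≤ O} :=
    ⟨⟨⊥, by rw [BotHomClass.map_bot, D.map_bot]; exact bot_le⟩⟩
  obtain ⟨x, hx⟩ := hk.exists_le_of_le_iSup (fun x y => ⟨⟨x.1 ⊔ y.1,
    by rw [SupHomClass.map_sup, D.map_sup]; exact sup_le x.2 y.2⟩, le_sup_left, le_sup_right⟩) h
  exact (sigmaClosed_le_e hx).trans x.2

theorem map_le_of_e_le_iSup (f : SupBotHom L M) {a : L} {O : Mδ}
    (h : C.e a ≤ ⨆ x : {x : L // D.e (f x) ≤ O}, C.e x.1) : D.e (f a) ≤ O :=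
  (sigmaClosed_e (OrderHomClass.mono f) a).symm.trans_le
    (sigmaClosed_le_of_le_iSup f (C.isClosed_e a) h)

theorem sigma_sSup (f : SupBotHom L M) (S : Set Lδ) :
    C.sigma D f (sSup S) = ⨆ u ∈ S, C.sigma D f u := by
  refine le_antisymm (sigma_le fun k hk hkS => ?_)
    (iSup₂_le fun u hu => sigma_mono f (le_sSup hu))
  refine D.le_of_forall_le_isOpen fun O hO hSO => sigmaClosed_le_of_le_iSup f hk ?_
  exact hkS.trans (sSup_le fun u hu =>
    le_iSup_of_sigma_le (OrderHomClass.mono f) hO ((le_iSup₂ u hu).trans hSO))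

end Sigma

section Pi

variable {L₁ L₂ M : Type*} [DistribLattice L₁] [OrderBot L₁] [OrderTop L₁]
  [DistribLattice L₂] [OrderBot L₂] [OrderTop L₂] [DistribLattice M] [OrderBot M] [OrderTop M]
  {L₁δ L₂δ Mδ : Type*} [CompleteLattice L₁δ] [CompleteLattice L₂δ] [CompleteLattice Mδ]
  (C₁ : CanonicalExtension L₁ L₁δ) (C₂ : CanonicalExtension L₂ L₂δ)
  (D : CanonicalExtension M Mδ)

def piClosedOpen (g : L₁ → L₂ → M) (κ : L₁δ) (o : L₂δ) : Mδ :=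
  ⨆ p : {p : L₁ × L₂ // C₂.e p.2 ≤ o ∧ κ ≤ C₁.e p.1}, D.e (g p.1.1 p.1.2)

def pi (g : L₁ → L₂ → M) (q : L₁δ) (u : L₂δ) : Mδ :=
  ⨅ x : {x : L₁δ × L₂δ // C₂.IsOpen x.2 ∧ u ≤ x.2 ∧ C₁.IsClosed x.1 ∧ x.1 ≤ q},
    C₁.piClosedOpen C₂ D g x.1.1 x.1.2

variable {C₁ C₂ D} {g : L₁ → L₂ → M}

theorem e_le_piClosedOpen {κ : L₁δ} {o : L₂δ} {α : L₁} {a : L₂} (hα : κ ≤ C₁.e α)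
    (ha : C₂.e a ≤ o) : D.e (g α a) ≤ C₁.piClosedOpen C₂ D g κ o :=
  le_iSup_of_le (⟨(α, a), ha, hα⟩ : {p : L₁ × L₂ // C₂.e p.2 ≤ o ∧ κ ≤ C₁.e p.1}) le_rfl

theorem isOpen_piClosedOpen (κ : L₁δ) (o : L₂δ) : D.IsOpen (C₁.piClosedOpen C₂ D g κ o) :=
  D.isOpen_iSup _

theorem pi_le_piClosedOpen {q κ : L₁δ} {u o : L₂δ} (hκ : C₁.IsClosed κ) (hκq : κ ≤ q)
    (ho : C₂.IsOpen o) (huo : u ≤ o) : C₁.pi C₂ D g q u ≤ C₁.piClosedOpen C₂ D g κ o :=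
  iInf_le_of_le ⟨(κ, o), ho, huo, hκ, hκq⟩ le_rfl

theorem le_pi {q : L₁δ} {u : L₂δ} {v : Mδ} (h : ∀ κ o, C₁.IsClosed κ → κ ≤ q → C₂.IsOpen o →
    u ≤ o → v ≤ C₁.piClosedOpen C₂ D g κ o) : v ≤ C₁.pi C₂ D g q u :=
  le_iInf fun x => h _ _ x.2.2.2.1 x.2.2.2.2 x.2.1 x.2.2.1

theorem pi_anti_left (u : L₂δ) : Antitone fun q => C₁.pi C₂ D g q u := fun _ _ hqr =>
  le_pi fun _ _ hκ hκq ho huo => pi_le_piClosedOpen hκ (hκq.trans hqr) ho huo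

theorem pi_mono_right (q : L₁δ) : Monotone (C₁.pi C₂ D g q) := fun _ _ huv =>
  le_pi fun _ _ hκ hκq ho hvo => pi_le_piClosedOpen hκ hκq ho (huv.trans hvo)

theorem exists_of_le_piClosedOpen (hanti : ∀ a, Antitone (g · a)) (hmono : ∀ α, Monotone (g α))
    {κ : L₁δ} {o : L₂δ} {c : Mδ} (hc : D.IsClosed c) (h : c ≤ C₁.piClosedOpen C₂ D g κ o) :
    ∃ α a, κ ≤ C₁.e α ∧ C₂.e a ≤ o ∧ c ≤ D.e (g α a) := by
  have : Nonempty {p : L₁ × L₂ // C₂.e p.2 ≤ o ∧ κ ≤ C₁.e p.1} :=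
    ⟨⟨(⊤, ⊥), by rw [C₂.map_bot]; exact bot_le, by rw [C₁.map_top]; exact le_top⟩⟩
  have hdir : Directed (· ≤ ·)
      fun p : {p : L₁ × L₂ // C₂.e p.2 ≤ o ∧ κ ≤ C₁.e p.1} => g p.1.1 p.1.2 := fun p p' =>
    ⟨⟨(p.1.1 ⊓ p'.1.1, p.1.2 ⊔ p'.1.2), by rw [C₂.map_sup]; exact sup_le p.2.1 p'.2.1,
      by rw [C₁.map_inf]; exact le_inf p.2.2 p'.2.2⟩,
      (hanti _ inf_le_left).trans' (hmono _ le_sup_left),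
      (hanti _ inf_le_right).trans' (hmono _ le_sup_right)⟩
  obtain ⟨⟨⟨α, a⟩, ha, hα⟩, hc⟩ := hc.exists_le_of_le_iSup hdir h
  exact ⟨α, a, hα, ha, hc⟩

theorem le_iSup_of_le_pi (hanti : ∀ a, Antitone (g · a)) (hmono : ∀ α, Monotone (g α))
    {q : L₁δ} {u o : L₂δ} {c : Mδ} (hc : D.IsClosed c) (ho : C₂.IsOpen o) (huo : u ≤ o)
    (h : c ≤ C₁.pi C₂ D g q u) :
    q ≤ ⨆ p : {p : L₁ × L₂ // C₂.e p.2 ≤ o ∧ c ≤ D.e (g p.1 p.2)}, C₁.e p.1.1 := by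
  refine C₁.le_of_forall_isClosed_le fun κ hκ hκq => ?_
  obtain ⟨α, a, hα, ha, hca⟩ :=
    exists_of_le_piClosedOpen hanti hmono hc (h.trans (pi_le_piClosedOpen hκ hκq ho huo))
  exact hα.trans (le_iSup_of_le ⟨(α, a), ha, hca⟩ le_rfl)

theorem le_piClosedOpen_of_le_iSup (hsup : ∀ α β a, g (α ⊔ β) a = g α a ⊓ g β a)
    (hbot : ∀ a, g ⊥ a = ⊤) (hmono : ∀ α, Monotone (g α)) {κ : L₁δ} {o : L₂δ} {c : Mδ}
    (hκ : C₁.IsClosed κ)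
    (h : κ ≤ ⨆ p : {p : L₁ × L₂ // C₂.e p.2 ≤ o ∧ c ≤ D.e (g p.1 p.2)}, C₁.e p.1.1) :
    c ≤ C₁.piClosedOpen C₂ D g κ o := by
  have : Nonempty {p : L₁ × L₂ // C₂.e p.2 ≤ o ∧ c ≤ D.e (g p.1 p.2)} :=
    ⟨⟨(⊥, ⊥), by rw [C₂.map_bot]; exact bot_le, by rw [hbot, D.map_top]; exact le_top⟩⟩
  have hdir : Directed (· ≤ ·)
      fun p : {p : L₁ × L₂ // C₂.e p.2 ≤ o ∧ c ≤ D.e (g p.1 p.2)} => p.1.1 := fun p p' =>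
    ⟨⟨(p.1.1 ⊔ p'.1.1, p.1.2 ⊔ p'.1.2), by rw [C₂.map_sup]; exact sup_le p.2.1 p'.2.1, by
      rw [hsup, D.map_inf]
      exact le_inf (p.2.2.trans (D.e_mono (hmono _ le_sup_left)))
        (p'.2.2.trans (D.e_mono (hmono _ le_sup_right)))⟩, le_sup_left, le_sup_right⟩
  obtain ⟨⟨⟨α, a⟩, ha, hca⟩, hκα⟩ := hκ.exists_le_of_le_iSup hdir h
  exact hca.trans (e_le_piClosedOpen hκα ha)

theorem pi_sSup_left (hsup : ∀ α β a, g (α ⊔ β) a = g α a ⊓ g β a) (hbot : ∀ a, g ⊥ a = ⊤)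
    (hmono : ∀ α, Monotone (g α)) (S : Set L₁δ) (u : L₂δ) :
    C₁.pi C₂ D g (sSup S) u = ⨅ q ∈ S, C₁.pi C₂ D g q u := by
  have hanti : ∀ a, Antitone (g · a) := fun a α β hαβ => by
    dsimp only; rw [← sup_eq_right.2 hαβ, hsup]; exact inf_le_left
  refine le_antisymm (le_iInf₂ fun q hq => pi_anti_left u (le_sSup hq))
    (le_pi fun κ o hκ hκS ho huo => D.le_of_forall_isClosed_le fun c hc hcS => ?_)
  refine le_piClosedOpen_of_le_iSup hsup hbot hmono hκ (hκS.trans (sSup_le fun q hq => ?_))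
  exact le_iSup_of_le_pi hanti hmono hc ho huo (hcS.trans (iInf₂_le q hq))

theorem pi_sInf_right (hinf : ∀ α a b, g α (a ⊓ b) = g α a ⊓ g α b) (htop : ∀ α, g α ⊤ = ⊤)
    (hanti : ∀ a, Antitone (g · a)) (q : L₁δ) (S : Set L₂δ) :
    C₁.pi C₂ D g q (sInf S) = ⨅ w ∈ S, C₁.pi C₂ D g q w := by
  have hmono : ∀ α, Monotone (g α) := fun α a b hab => by
    rw [← inf_eq_left.2 hab, hinf]; exact inf_le_right
  refine le_antisymm (le_iInf₂ fun w hw => pi_mono_right q (sInf_le hw))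
    (le_pi fun κ ω hκ hκq hω hSω => D.le_of_forall_isClosed_le fun c hc hcS => ?_)
  let Z := {p : L₁ × L₂ // κ ≤ C₁.e p.1 ∧ c ≤ D.e (g p.1 p.2)}
  have : Nonempty Z :=
    ⟨⟨(⊤, ⊤), by rw [C₁.map_top]; exact le_top, by rw [htop, D.map_top]; exact le_top⟩⟩
  have hdir : Directed (· ≥ ·) fun p : Z => p.1.2 := fun p p' =>
    ⟨⟨(p.1.1 ⊓ p'.1.1, p.1.2 ⊓ p'.1.2), by rw [C₁.map_inf]; exact le_inf p.2.1 p'.2.1, by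
      rw [hinf, D.map_inf]
      exact le_inf (p.2.2.trans (D.e_mono (hanti _ inf_le_left)))
        (p'.2.2.trans (D.e_mono (hanti _ inf_le_right)))⟩, inf_le_left, inf_le_right⟩
  have hZS : ⨅ p : Z, C₂.e p.1.2 ≤ sInf S := by
    refine le_sInf fun w hw => C₂.le_of_forall_le_isOpen fun ω' hω' hwω' => ?_
    obtain ⟨α, a, hα, ha, hca⟩ := exists_of_le_piClosedOpen hanti hmono hc
      ((hcS.trans (iInf₂_le w hw)).trans (pi_le_piClosedOpen hκ hκq hω' hwω'))
    exact iInf_le_of_le ⟨(α, a), hα, hca⟩ ha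
  obtain ⟨⟨⟨α, a⟩, hα, hca⟩, ha⟩ := hω.exists_le_of_iInf_le hdir (hZS.trans hSω)
  exact hca.trans (e_le_piClosedOpen hα ha)

end Pi

section Sigma₂

variable {L : Type*} [DistribLattice L] [OrderBot L] [OrderTop L] {Lδ : Type*}
  [CompleteLattice Lδ] (C : CanonicalExtension L Lδ)

def sigma₂Closed (g : L → L → L) (κ₁ κ₂ : Lδ) : Lδ :=
  ⨅ p : {p : L × L // κ₁ ≤ C.e p.1 ∧ κ₂ ≤ C.e p.2}, C.e (g p.1.1 p.1.2)

def sigma₂ (g : L → L → L) (q₁ q₂ : Lδ) : Lδ :=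
  ⨆ p : {p : Lδ × Lδ // C.IsClosed p.1 ∧ C.IsClosed p.2 ∧ p.1 ≤ q₁ ∧ p.2 ≤ q₂},
    C.sigma₂Closed g p.1.1 p.1.2

variable {C} {g : L → L → L}

theorem sigma₂Closed_le_e {κ₁ κ₂ : Lδ} {α β : L} (h₁ : κ₁ ≤ C.e α) (h₂ : κ₂ ≤ C.e β) :
    C.sigma₂Closed g κ₁ κ₂ ≤ C.e (g α β) :=
  iInf_le_of_le ⟨(α, β), h₁, h₂⟩ le_rfl

theorem sigma₂Closed_mono {κ₁ κ₂ κ₁' κ₂' : Lδ} (h₁ : κ₁ ≤ κ₁') (h₂ : κ₂ ≤ κ₂') :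
    C.sigma₂Closed g κ₁ κ₂ ≤ C.sigma₂Closed g κ₁' κ₂' :=
  le_iInf fun p => sigma₂Closed_le_e (h₁.trans p.2.1) (h₂.trans p.2.2)

theorem isClosed_sigma₂Closed (κ₁ κ₂ : Lδ) : C.IsClosed (C.sigma₂Closed g κ₁ κ₂) :=
  C.isClosed_iInf _

theorem sigma₂Closed_le_sigma₂ {κ₁ κ₂ q w : Lδ} (h₁ : C.IsClosed κ₁) (h₂ : C.IsClosed κ₂)
    (hq : κ₁ ≤ q) (hw : κ₂ ≤ w) : C.sigma₂Closed g κ₁ κ₂ ≤ C.sigma₂ g q w :=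
  le_iSup_of_le (⟨(κ₁, κ₂), h₁, h₂, hq, hw⟩ :
    {p : Lδ × Lδ // C.IsClosed p.1 ∧ C.IsClosed p.2 ∧ p.1 ≤ q ∧ p.2 ≤ w}) le_rfl

theorem sigma₂_le {q w v : Lδ} (h : ∀ κ₁ κ₂, C.IsClosed κ₁ → C.IsClosed κ₂ → κ₁ ≤ q → κ₂ ≤ w →
    C.sigma₂Closed g κ₁ κ₂ ≤ v) : C.sigma₂ g q w ≤ v :=
  iSup_le fun p => h _ _ p.2.1 p.2.2.1 p.2.2.2.1 p.2.2.2.2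

theorem sigma₂_mono {q w q' w' : Lδ} (hq : q ≤ q') (hw : w ≤ w') :
    C.sigma₂ g q w ≤ C.sigma₂ g q' w' :=
  sigma₂_le fun _ _ h₁ h₂ h₁q h₂w => sigma₂Closed_le_sigma₂ h₁ h₂ (h₁q.trans hq) (h₂w.trans hw)

theorem sigma₂Closed_flip (κ₁ κ₂ : Lδ) :
    C.sigma₂Closed (flip g) κ₁ κ₂ = C.sigma₂Closed g κ₂ κ₁ :=
  Equiv.iInf_congr ((Equiv.prodComm L L).subtypeEquiv fun _ => and_comm) fun _ => rfl

theorem sigma₂_flip (q w : Lδ) : C.sigma₂ (flip g) q w = C.sigma₂ g w q :=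
  Equiv.iSup_congr ((Equiv.prodComm Lδ Lδ).subtypeEquiv fun _ => by
    simp only [Equiv.prodComm_apply, Prod.fst_swap, Prod.snd_swap]; tauto)
    fun p => (sigma₂Closed_flip _ _).symm

theorem exists_of_sigma₂Closed_le (hmono₁ : ∀ b, Monotone (g · b)) (hmono₂ : ∀ a, Monotone (g a))
    {κ₁ κ₂ O : Lδ} (hO : C.IsOpen O) (h : C.sigma₂Closed g κ₁ κ₂ ≤ O) :
    ∃ α β, κ₁ ≤ C.e α ∧ κ₂ ≤ C.e β ∧ C.e (g α β) ≤ O := by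
  have : Nonempty {p : L × L // κ₁ ≤ C.e p.1 ∧ κ₂ ≤ C.e p.2} :=
    ⟨⟨(⊤, ⊤), by simp only [C.map_top, le_top, and_self]⟩⟩
  have hdir : Directed (· ≥ ·)
      fun p : {p : L × L // κ₁ ≤ C.e p.1 ∧ κ₂ ≤ C.e p.2} => g p.1.1 p.1.2 := fun p p' =>
    ⟨⟨(p.1.1 ⊓ p'.1.1, p.1.2 ⊓ p'.1.2), by rw [C.map_inf]; exact le_inf p.2.1 p'.2.1,
      by rw [C.map_inf]; exact le_inf p.2.2 p'.2.2⟩,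
      (hmono₁ _ inf_le_left).trans (hmono₂ _ inf_le_left),
      (hmono₁ _ inf_le_right).trans (hmono₂ _ inf_le_right)⟩
  obtain ⟨⟨⟨α, β⟩, hα, hβ⟩, h⟩ := hO.exists_le_of_iInf_le hdir h
  exact ⟨α, β, hα, hβ, h⟩

theorem sigma₂Closed_le_e_iff (hmono₁ : ∀ b, Monotone (g · b)) (hmono₂ : ∀ a, Monotone (g a))
    {κ₁ κ₂ : Lδ} {ξ : L} :
    C.sigma₂Closed g κ₁ κ₂ ≤ C.e ξ ↔ ∃ α β, κ₁ ≤ C.e α ∧ κ₂ ≤ C.e β ∧ g α β ≤ ξ := by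
  refine ⟨fun h => ?_, fun ⟨α, β, hα, hβ, h⟩ => (sigma₂Closed_le_e hα hβ).trans (C.e_mono h)⟩
  obtain ⟨α, β, hα, hβ, h⟩ := exists_of_sigma₂Closed_le hmono₁ hmono₂ (C.isOpen_e ξ) h
  exact ⟨α, β, hα, hβ, C.e_le_e.1 h⟩

theorem sigma₂_sSup_left (hsup : ∀ a b c, g (a ⊔ b) c = g a c ⊔ g b c) (hbot : ∀ c, g ⊥ c = ⊥)
    (hmono₂ : ∀ a, Monotone (g a)) (S : Set Lδ) (w : Lδ) :
    C.sigma₂ g (sSup S) w = ⨆ q ∈ S, C.sigma₂ g q w := by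
  have hmono₁ : ∀ b, Monotone (g · b) := fun b a a' haa' => by
    dsimp only; rw [← sup_eq_right.2 haa', hsup]; exact le_sup_left
  refine le_antisymm (sigma₂_le fun κ₁ κ₂ h₁ h₂ hκ₁ hκ₂ => ?_)
    (iSup₂_le fun q hq => sigma₂_mono (le_sSup hq) le_rfl)
  refine C.le_of_forall_le_isOpen fun O hO hSO => ?_
  let Z := {p : L × L // κ₂ ≤ C.e p.2 ∧ C.e (g p.1 p.2) ≤ O}
  have : Nonempty Z := ⟨⟨(⊥, ⊤), by rw [C.map_top]; exact le_top,
    by rw [hbot, C.map_bot]; exact bot_le⟩⟩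
  have hdir : Directed (· ≤ ·) fun p : Z => p.1.1 := fun p p' =>
    ⟨⟨(p.1.1 ⊔ p'.1.1, p.1.2 ⊓ p'.1.2), by rw [C.map_inf]; exact le_inf p.2.1 p'.2.1, by
      rw [hsup, C.map_sup]
      exact sup_le ((C.e_mono (hmono₂ _ inf_le_left)).trans p.2.2)
        ((C.e_mono (hmono₂ _ inf_le_right)).trans p'.2.2)⟩, le_sup_left, le_sup_right⟩
  have hSZ : sSup S ≤ ⨆ p : Z, C.e p.1.1 := by
    refine sSup_le fun q hq => C.le_of_forall_isClosed_le fun κ hκ hκq => ?_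
    obtain ⟨α, β, hα, hβ, hαβ⟩ := exists_of_sigma₂Closed_le hmono₁ hmono₂ hO
      ((sigma₂Closed_le_sigma₂ hκ h₂ hκq hκ₂).trans ((le_iSup₂ q hq).trans hSO))
    exact hα.trans (le_iSup_of_le ⟨(α, β), hβ, hαβ⟩ le_rfl)
  obtain ⟨⟨⟨α, β⟩, hβ, hαβ⟩, hα⟩ := h₁.exists_le_of_le_iSup hdir (hκ₁.trans hSZ)
  exact (sigma₂Closed_le_e hα hβ).trans hαβ

theorem sigma₂_sSup_right (hsup : ∀ a b c, g a (b ⊔ c) = g a b ⊔ g a c) (hbot : ∀ a, g a ⊥ = ⊥)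
    (hmono₁ : ∀ b, Monotone (g · b)) (q : Lδ) (S : Set Lδ) :
    C.sigma₂ g q (sSup S) = ⨆ w ∈ S, C.sigma₂ g q w := by
  simpa only [sigma₂_flip] using
    sigma₂_sSup_left (C := C) (g := flip g) (fun a b c => hsup c a b) hbot hmono₁ S q

theorem sigma₂_top_right (h : ∀ a, g a ⊤ = a) (q : Lδ) : C.sigma₂ g q ⊤ = q := by
  refine le_antisymm (sigma₂_le fun κ₁ κ₂ h₁ _ hκ₁ _ => le_trans ?_ hκ₁) ?_
  · calc C.sigma₂Closed g κ₁ κ₂ ≤ ⨅ α : {α : L // κ₁ ≤ C.e α}, C.e α.1 :=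
          le_iInf fun α => (sigma₂Closed_le_e α.2 (le_top.trans_eq C.map_top.symm)).trans_eq
            (by rw [h])
      _ = κ₁ := h₁.eq_iInf.symm
  · refine C.le_of_forall_isClosed_le fun κ hκ hκq => le_trans (le_iInf fun p => ?_)
      (sigma₂Closed_le_sigma₂ hκ C.isClosed_top hκq le_rfl)
    obtain ⟨⟨α, β⟩, hα, hβ⟩ := p
    obtain rfl : β = ⊤ := top_le_iff.1 (C.e_le_e.1 (C.map_top ▸ hβ))
    simpa only [h] using hα

theorem sigma₂_top_left (h : ∀ a, g ⊤ a = a) (q : Lδ) : C.sigma₂ g ⊤ q = q := by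
  simpa only [sigma₂_flip] using sigma₂_top_right (C := C) (g := flip g) h q

theorem sigma₂_iSup_left (hsup : ∀ a b c, g (a ⊔ b) c = g a c ⊔ g b c) (hbot : ∀ c, g ⊥ c = ⊥)
    (hmono₂ : ∀ a, Monotone (g a)) {ι : Sort*} (f : ι → Lδ) (w : Lδ) :
    C.sigma₂ g (⨆ i, f i) w = ⨆ i, C.sigma₂ g (f i) w := by
  rw [← sSup_range, sigma₂_sSup_left hsup hbot hmono₂, iSup_range]

theorem sigma₂_iSup_right (hsup : ∀ a b c, g a (b ⊔ c) = g a b ⊔ g a c) (hbot : ∀ a, g a ⊥ = ⊥)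
    (hmono₁ : ∀ b, Monotone (g · b)) {ι : Sort*} (q : Lδ) (f : ι → Lδ) :
    C.sigma₂ g q (⨆ i, f i) = ⨆ i, C.sigma₂ g q (f i) := by
  rw [← sSup_range, sigma₂_sSup_right hsup hbot hmono₁, iSup_range]

theorem sigma₂Closed_assoc (hassoc : ∀ a b c, g (g a b) c = g a (g b c))
    (hmono₁ : ∀ b, Monotone (g · b)) (hmono₂ : ∀ a, Monotone (g a)) (κ₁ κ₂ κ₃ : Lδ) :
    C.sigma₂Closed g (C.sigma₂Closed g κ₁ κ₂) κ₃
      = C.sigma₂Closed g κ₁ (C.sigma₂Closed g κ₂ κ₃) := by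
  refine (isClosed_sigma₂Closed _ _).eq_of_forall_le_e_iff (isClosed_sigma₂Closed _ _) fun ξ => ?_
  simp only [sigma₂Closed_le_e_iff hmono₁ hmono₂]
  constructor
  · rintro ⟨ζ, γ, ⟨α, β, hα, hβ, hαβ⟩, hγ, hζγ⟩
    exact ⟨α, g β γ, hα, ⟨β, γ, hβ, hγ, le_rfl⟩, (hassoc α β γ).symm.le.trans
      ((hmono₁ γ hαβ).trans hζγ)⟩
  · rintro ⟨α, η, hα, ⟨β, γ, hβ, hγ, hβγ⟩, hαη⟩
    exact ⟨g α β, γ, ⟨α, β, hα, hβ, le_rfl⟩, hγ, (hassoc α β γ).le.trans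
      ((hmono₂ α hβγ).trans hαη)⟩

theorem sigma₂_assoc (hassoc : ∀ a b c, g (g a b) c = g a (g b c))
    (hsup₁ : ∀ a b c, g (a ⊔ b) c = g a c ⊔ g b c) (hsup₂ : ∀ a b c, g a (b ⊔ c) = g a b ⊔ g a c)
    (hbot₁ : ∀ c, g ⊥ c = ⊥) (hbot₂ : ∀ a, g a ⊥ = ⊥) (q w r : Lδ) :
    C.sigma₂ g (C.sigma₂ g q w) r = C.sigma₂ g q (C.sigma₂ g w r) := by
  have hmono₁ : ∀ b, Monotone (g · b) := fun b a a' haa' => by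
    dsimp only; rw [← sup_eq_right.2 haa', hsup₁]; exact le_sup_left
  have hmono₂ : ∀ a, Monotone (g a) := fun a b b' hbb' => by
    rw [← sup_eq_right.2 hbb', hsup₂]; exact le_sup_left
  refine le_antisymm ((sigma₂_iSup_left hsup₁ hbot₁ hmono₂ _ r).trans_le (iSup_le fun p => ?_))
    ((sigma₂_iSup_right hsup₂ hbot₂ hmono₁ q _).trans_le (iSup_le fun p => ?_))
  · refine sigma₂_le fun c κ₃ _ h₃ hcp hκ₃ => ?_
    calc C.sigma₂Closed g c κ₃
        ≤ C.sigma₂Closed g (C.sigma₂Closed g p.1.1 p.1.2) κ₃ := sigma₂Closed_mono hcp le_rfl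
      _ = C.sigma₂Closed g p.1.1 (C.sigma₂Closed g p.1.2 κ₃) :=
          sigma₂Closed_assoc hassoc hmono₁ hmono₂ _ _ _
      _ ≤ _ := sigma₂Closed_le_sigma₂ p.2.1 (isClosed_sigma₂Closed _ _) p.2.2.2.1
          (sigma₂Closed_le_sigma₂ p.2.2.1 h₃ p.2.2.2.2 hκ₃)
  · refine sigma₂_le fun κ₁ c h₁ _ hκ₁ hcp => ?_
    calc C.sigma₂Closed g κ₁ c
        ≤ C.sigma₂Closed g κ₁ (C.sigma₂Closed g p.1.1 p.1.2) := sigma₂Closed_mono le_rfl hcp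
      _ = C.sigma₂Closed g (C.sigma₂Closed g κ₁ p.1.1) p.1.2 :=
          (sigma₂Closed_assoc hassoc hmono₁ hmono₂ _ _ _).symm
      _ ≤ _ := sigma₂Closed_le_sigma₂ (isClosed_sigma₂Closed _ _) p.2.2.1
          (sigma₂Closed_le_sigma₂ h₁ p.2.1 hκ₁ p.2.2.2.1) p.2.2.2.2

end Sigma₂

end CanonicalExtension

namespace LRCAlgebra

variable {W R : Type*} [HeytingAlgebra W] [DistribLattice R] [BoundedOrder R]
  (F : LRCAlgebra W R)

def diaHom : SupBotHom W W := ⟨⟨F.dia, F.dia_sup⟩, F.dia_bot⟩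

def diaRHom : SupBotHom R W := ⟨⟨F.diaR, F.diaR_sup⟩, F.diaR_bot⟩

theorem mul_mono_left (b : R) : Monotone (F.mul · b) := fun a a' h => by
  dsimp only; rw [← sup_eq_right.2 h, F.mul_sup_left]; exact le_sup_left

theorem mul_mono_right (a : R) : Monotone (F.mul a) := fun b b' h => by
  rw [← sup_eq_right.2 h, F.mul_sup_right]; exact le_sup_left

theorem box_anti_left (a : W) : Antitone (F.box · a) := fun α α' h => by
  dsimp only; rw [← sup_eq_right.2 h, F.box_sup]; exact inf_le_left

theorem boxR_anti_left (β : R) : Antitone (F.boxR · β) := fun α α' h => by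
  dsimp only; rw [← sup_eq_right.2 h, F.boxR_sup]; exact inf_le_left

theorem boxR_mono_right (α : R) : Monotone (F.boxR α) := fun β β' h => by
  rw [← inf_eq_left.2 h, F.boxR_inf]; exact inf_le_right

end LRCAlgebra

section Canonicity

open CanonicalExtension

variable {W R : Type*} [HeytingAlgebra W] [DistribLattice R] [BoundedOrder R]
  {Wδ Rδ : Type*} [CompletelyDistribLattice Wδ] [CompletelyDistribLattice Rδ]
  (F : LRCAlgebra W R) (CW : CanonicalExtension W Wδ) (CR : CanonicalExtension R Rδ)

theorem diaSigma_eq_sigma : diaSigma F CW = CW.sigma CW F.diaHom := rfl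

theorem diaRSigma_eq_sigma : diaRSigma F CW CR = CR.sigma CW F.diaRHom := rfl

theorem boxPi_eq_pi : boxPi F CW CR = CR.pi CW CW F.box := rfl

theorem boxRPi_eq_pi : boxRPi F CW CR = CR.pi CR CW F.boxR := rfl

theorem mulSigma_eq_sigma₂ : mulSigma F CR = CR.sigma₂ F.mul := rfl

theorem boxPi_boxPi_le_boxPi_mulSigma (q w : Rδ) (u : Wδ) :
    boxPi F CW CR q (boxPi F CW CR w u) ≤ boxPi F CW CR (mulSigma F CR q w) u := by
  rw [boxPi_eq_pi, mulSigma_eq_sigma₂]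
  refine le_pi fun κ o hκ hκq ho huo => CW.le_of_forall_isClosed_le fun c hc hcq => ?_
  refine le_piClosedOpen_of_le_iSup F.box_sup F.box_bot F.box_mono hκ
    (hκq.trans (sigma₂_le fun κ₁ κ₂ h₁ h₂ hκ₁ hκ₂ => ?_))
  obtain ⟨α, b, hα, hb, hcb⟩ := exists_of_le_piClosedOpen F.box_anti_left F.box_mono hc
    (hcq.trans (pi_le_piClosedOpen h₁ hκ₁ (isOpen_piClosedOpen _ _)
      (pi_le_piClosedOpen h₂ hκ₂ ho huo)))
  obtain ⟨β, a, hβ, ha, hba⟩ :=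
    exists_of_le_piClosedOpen F.box_anti_left F.box_mono (CW.isClosed_e b) hb
  have hc' : c ≤ CW.e (F.box (F.mul α β) a) :=
    hcb.trans (CW.e_mono ((F.box_mono α (CW.e_le_e.1 hba)).trans (F.b3 α β a)))
  exact (sigma₂Closed_le_e hα hβ).trans (le_iSup_of_le ⟨(F.mul α β, a), ha, hc'⟩ le_rfl)

theorem diaRSigma_inf_boxPi_le_diaSigma (q : Rδ) (u : Wδ) :
    diaRSigma F CW CR q ⊓ boxPi F CW CR q u ≤ diaSigma F CW u := by
  rw [diaRSigma_eq_sigma, boxPi_eq_pi, diaSigma_eq_sigma]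
  refine (iSup_inf_eq _ _).trans_le (iSup_le fun κ => ?_)
  refine CW.le_of_forall_isClosed_le fun c hc hcκ => CW.le_of_forall_le_isOpen fun O hO hO' => ?_
  obtain ⟨α, a, hα, ha, hca⟩ := exists_of_le_piClosedOpen F.box_anti_left F.box_mono hc
    ((hcκ.trans inf_le_right).trans (pi_le_piClosedOpen κ.2.1 κ.2.2 (CW.isOpen_iSup _)
      (le_iSup_of_sigma_le (OrderHomClass.mono F.diaHom) hO hO')))
  calc c ≤ CW.e (F.diaR α) ⊓ CW.e (F.box α a) :=
        le_inf ((hcκ.trans inf_le_left).trans (sigmaClosed_le_e hα)) hca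
    _ = CW.e (F.diaR α ⊓ F.box α a) := (CW.map_inf _ _).symm
    _ ≤ CW.e (F.dia a) := CW.e_mono (F.bd1 α a)
    _ ≤ O := map_le_of_e_le_iSup F.diaHom ha

theorem boxRPi_le_boxPi_diaRSigma (q w : Rδ) :
    boxRPi F CW CR q w ≤ boxPi F CW CR q (diaRSigma F CW CR w) := by
  rw [boxRPi_eq_pi, boxPi_eq_pi, diaRSigma_eq_sigma]
  refine le_pi fun κ o hκ hκq ho hwo => CW.le_of_forall_isClosed_le fun c hc hcq => ?_
  obtain ⟨α, β, hα, hβ, hcβ⟩ := exists_of_le_piClosedOpen F.boxR_anti_left F.boxR_mono_right hc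
    (hcq.trans (pi_le_piClosedOpen hκ hκq (CR.isOpen_iSup _)
      (le_iSup_of_sigma_le (OrderHomClass.mono F.diaRHom) ho hwo)))
  exact hcβ.trans ((CW.e_mono (F.bd2 α β)).trans
    (e_le_piClosedOpen hα (map_le_of_e_le_iSup F.diaRHom hβ)))

end Canonicity

/-- **Canonicity of LRC**: for any heterogeneous LRC-algebra
`F = (W, R, ▷, ◇, ▷', ◇')` and canonical extensions `Wδ` of `W` and `Rδ` of
`R`, the structure `Fδ = (Wδ, Rδ, ▷^π, ◇^σ, ▷'^π, ◇'^σ)` is a perfect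
heterogeneous LRC-algebra: `Wδ` and `Rδ` are perfect (they are complete and
completely distributive, and completely join-generated by their completely
join-irreducible elements), all the defining axioms of heterogeneous
LRC-algebras (including B3, BD1 and BD2) remain valid for the extended
operations, and the extended operations satisfy the infinitary versions of
the join- and meet-preservation properties. -/
theorem lrc_canonicity
    {W R : Type*} [HeytingAlgebra W] [DistribLattice R] [BoundedOrder R]
    {Wδ Rδ : Type*} [CompletelyDistribLattice Wδ] [CompletelyDistribLattice Rδ]
    (F : LRCAlgebra W R)
    (CW : CanonicalExtension W Wδ) (CR : CanonicalExtension R Rδ) :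
    -- the lattices `Wδ` and `Rδ` are perfect
    JoinGeneratedByCJIrred Wδ ∧ JoinGeneratedByCJIrred Rδ ∧
    -- `·^σ` is associative with unit `1 = ⊤` and is completely
    -- join-preserving in each coordinate (R1-R4 for the extension)
    (∀ q w r : Rδ, mulSigma F CR (mulSigma F CR q w) r
        = mulSigma F CR q (mulSigma F CR w r)) ∧
    (∀ q : Rδ, mulSigma F CR q ⊤ = q) ∧
    (∀ q : Rδ, mulSigma F CR ⊤ q = q) ∧
    (∀ (S : Set Rδ) (w : Rδ), mulSigma F CR (sSup S) w
        = ⨆ q ∈ S, mulSigma F CR q w) ∧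
    (∀ (q : Rδ) (S : Set Rδ), mulSigma F CR q (sSup S)
        = ⨆ w ∈ S, mulSigma F CR q w) ∧
    -- `◇^σ` and `◇'^σ` are completely join-preserving
    -- (infinitary D1-D4)
    (∀ S : Set Wδ, diaSigma F CW (sSup S) = ⨆ u ∈ S, diaSigma F CW u) ∧
    (∀ S : Set Rδ, diaRSigma F CW CR (sSup S) = ⨆ q ∈ S, diaRSigma F CW CR q) ∧
    -- `▷^π` turns arbitrary joins in its first coordinate into meets and is
    -- monotone in its second coordinate (infinitary B1, B2)
    (∀ (S : Set Rδ) (u : Wδ), boxPi F CW CR (sSup S) u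
        = ⨅ q ∈ S, boxPi F CW CR q u) ∧
    (∀ q : Rδ, Monotone (boxPi F CW CR q)) ∧
    -- `▷'^π` turns arbitrary joins in its first coordinate into meets and
    -- preserves arbitrary meets in its second coordinate
    -- (infinitary B4, B5, B6, B7)
    (∀ (S : Set Rδ) (w : Rδ), boxRPi F CW CR (sSup S) w
        = ⨅ q ∈ S, boxRPi F CW CR q w) ∧
    (∀ (q : Rδ) (S : Set Rδ), boxRPi F CW CR q (sInf S)
        = ⨅ w ∈ S, boxRPi F CW CR q w) ∧
    -- axioms B3, BD1 and BD2 remain valid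
    (∀ (q w : Rδ) (u : Wδ), boxPi F CW CR q (boxPi F CW CR w u)
        ≤ boxPi F CW CR (mulSigma F CR q w) u) ∧
    (∀ (q : Rδ) (u : Wδ),
        diaRSigma F CW CR q ⊓ boxPi F CW CR q u ≤ diaSigma F CW u) ∧
    (∀ q w : Rδ, boxRPi F CW CR q w ≤ boxPi F CW CR q (diaRSigma F CW CR w)) := by
  rw [diaSigma_eq_sigma, diaRSigma_eq_sigma, boxPi_eq_pi, boxRPi_eq_pi, mulSigma_eq_sigma₂]
  open CanonicalExtension in
  exact ⟨CW.joinGeneratedByCJIrred, CR.joinGeneratedByCJIrred,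
    sigma₂_assoc F.mul_assoc F.mul_sup_left F.mul_sup_right F.mul_bot_left F.mul_bot_right,
    sigma₂_top_right F.mul_top, sigma₂_top_left F.top_mul,
    sigma₂_sSup_left F.mul_sup_left F.mul_bot_left F.mul_mono_right,
    sigma₂_sSup_right F.mul_sup_right F.mul_bot_right F.mul_mono_left,
    sigma_sSup F.diaHom, sigma_sSup F.diaRHom,
    pi_sSup_left F.box_sup F.box_bot F.box_mono, pi_mono_right,
    pi_sSup_left F.boxR_sup F.boxR_bot F.boxR_mono_right,
    pi_sInf_right F.boxR_inf F.boxR_top F.boxR_anti_left,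
    boxPi_boxPi_le_boxPi_mulSigma F CW CR, diaRSigma_inf_boxPi_le_diaSigma F CW CR,
    boxRPi_le_boxPi_diaRSigma F CW CR⟩
end

section
/- Disjunction property of LRC: for all LRC formula terms B and C, if B ∨ C is a theorem of the Hilbert system H.LRC, then B is a theorem of H.LRC or C is a theorem of H.LRC. -/
/-- The Aczel slash for LRC. -/
def LRCSlash : FmTerm → Prop
  | .atom n => LRCThm (.atom n)
  | .top => True
  | .bot => False
  | .or A B => LRCSlash A ∨ LRCSlash B
  | .and A B => LRCSlash A ∧ LRCSlash B
  | .imp A B => LRCThm (.imp A B) ∧ (LRCSlash A → LRCSlash B)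
  | .box α A => LRCThm (.box α A)
  | .dia _ => False
  | .diaR _ => False
  | .boxR α β => LRCThm (.boxR α β)

lemma LRCSlash.thm : ∀ A : FmTerm, LRCSlash A → LRCThm A := by
  intro A
  induction A with
  | atom n => exact id
  | top => exact fun _ => FDer.refl _
  | bot => exact fun h => h.elim
  | or A B ihA ihB =>
    rintro (h | h)
    · exact FDer.trans (ihA h) (FDer.le_or_left _ _)
    · exact FDer.trans (ihB h) (FDer.le_or_right _ _)
  | and A B ihA ihB =>
    rintro ⟨hA, hB⟩
    exact FDer.le_and (ihA hA) (ihB hB)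
  | imp A B ihA ihB => exact fun h => h.1
  | box α A ih => exact id
  | dia A ih => exact fun h => h.elim
  | diaR α => exact fun h => h.elim
  | boxR α β => exact id

lemma LRCSlash.sound {A B : FmTerm} (h : FDer A B) : LRCSlash A → LRCSlash B := by
  induction h with
  | refl A => exact id
  | trans _ _ ih1 ih2 => exact fun h => ih2 (ih1 h)
  | le_top A => exact fun _ => trivial
  | bot_le A => exact fun h => h.elim
  | and_le_left A B => exact fun h => h.1
  | and_le_right A B => exact fun h => h.2
  | le_and _ _ ih1 ih2 => exact fun h => ⟨ih1 h, ih2 h⟩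
  | le_or_left A B => exact Or.inl
  | le_or_right A B => exact Or.inr
  | or_le _ _ ih1 ih2 => exact fun h => h.elim ih1 ih2
  | @imp_intro C A B h ih =>
    intro hC
    refine ⟨?_, fun hA => ih ⟨hC, hA⟩⟩
    exact FDer.imp_intro (FDer.trans
      (FDer.le_and (FDer.trans (FDer.and_le_left _ _) (LRCSlash.thm C hC))
        (FDer.and_le_right _ _)) h)
  | imp_elim h ih => exact fun hCA => (ih hCA.1).2 hCA.2
  | d1₁ A B => exact fun h => h.elim
  | d1₂ A B => exact fun h => h.elim (fun h => h.elim) (fun h => h.elim)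
  | d2 => exact fun h => h.elim
  | d3₁ α β => exact fun h => h.elim
  | d3₂ α β => exact fun h => h.elim (fun h => h.elim) (fun h => h.elim)
  | d4 => exact fun h => h.elim
  | b1₁ α β A =>
    exact fun h => ⟨FDer.trans (FDer.trans h (FDer.b1₁ _ _ _)) (FDer.and_le_left _ _),
      FDer.trans (FDer.trans h (FDer.b1₁ _ _ _)) (FDer.and_le_right _ _)⟩
  | b1₂ α β A =>
    exact fun h => FDer.trans (FDer.le_and h.1 h.2) (FDer.b1₂ _ _ _)
  | b2 A => exact fun _ => FDer.b2 A
  | b3 α β A => exact fun h => FDer.trans h (FDer.b3 _ _ _)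
  | b4₁ α β γ =>
    exact fun h => ⟨FDer.trans (FDer.trans h (FDer.b4₁ _ _ _)) (FDer.and_le_left _ _),
      FDer.trans (FDer.trans h (FDer.b4₁ _ _ _)) (FDer.and_le_right _ _)⟩
  | b4₂ α β γ =>
    exact fun h => FDer.trans (FDer.le_and h.1 h.2) (FDer.b4₂ _ _ _)
  | b5 α => exact fun _ => FDer.b5 α
  | b6₁ α β γ =>
    exact fun h => ⟨FDer.trans (FDer.trans h (FDer.b6₁ _ _ _)) (FDer.and_le_left _ _),
      FDer.trans (FDer.trans h (FDer.b6₁ _ _ _)) (FDer.and_le_right _ _)⟩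
  | b6₂ α β γ =>
    exact fun h => FDer.trans (FDer.le_and h.1 h.2) (FDer.b6₂ _ _ _)
  | b7 α => exact fun _ => FDer.b7 α
  | bd1 α A => exact fun h => h.1.elim
  | bd2 α β => exact fun h => FDer.trans h (FDer.bd2 _ _)
  | mb α h ih => exact fun hb => FDer.trans hb (FDer.mb α h)
  | md h ih => exact fun hd => hd.elim
  | ab A h => exact fun hb => FDer.trans hb (FDer.ab A h)
  | mdr h => exact fun hd => hd.elim
  | mbr γ h => exact fun hb => FDer.trans hb (FDer.mbr γ h)
  | abr γ h => exact fun hb => FDer.trans hb (FDer.abr γ h)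

/-! ## Statement 3: disjunction property of LRC -/

/-- **Disjunction property of LRC**: if `B ∨ C` is a theorem of the Hilbert
system H.LRC, then `B` is a theorem of H.LRC or `C` is a theorem of H.LRC. -/
theorem lrc_disjunction_property (B C : FmTerm) (h : LRCThm (.or B C)) :
    LRCThm B ∨ LRCThm C := by
  have hs : LRCSlash (.or B C) := LRCSlash.sound h trivial
  exact hs.imp (LRCSlash.thm B) (LRCSlash.thm C)
end

section
/- Canonicity of axiom B2: let F = (A, Q, ▷, ◇, ▷', ◇') be a heterogeneous LRC-algebra with canonical extensions A^δ, Q^δ and π-extended operation ▷^π. Then 0 ▷^π u = ⊤ for every u ∈ A^δ, where 0 is the bottom element of Q. -/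
variable {W R : Type*} [HeytingAlgebra W] [DistribLattice R] [BoundedOrder R]
  {Wδ Rδ : Type*} [CompletelyDistribLattice Wδ] [CompletelyDistribLattice Rδ]

/-! ## Statement 5: canonicity of axiom B2 -/

/-- **Canonicity of axiom B2**: in the canonical extension of a heterogeneous
LRC-algebra, `0 ▷^π u = ⊤` for every `u ∈ Wδ`. -/
theorem canonicity_b2 (F : LRCAlgebra W R)
    (CW : CanonicalExtension W Wδ) (CR : CanonicalExtension R Rδ)
    (u : Wδ) : boxPi F CW CR ⊥ u = ⊤ := by
  rw [eq_top_iff]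
  refine le_iInf fun x => ?_
  have h : (⊤ : Wδ) ≤ CW.e (F.box ⊥ ⊥) := by
    rw [F.box_bot, CW.map_top]
  refine h.trans (le_iSup (fun p : {p : R × W // CW.e p.2 ≤ x.1.2 ∧ x.1.1 ≤ CR.e p.1} => CW.e (F.box p.1.1 p.1.2)) ⟨(⊥, ⊥), ?_, ?_⟩)
  · rw [CW.map_bot]; exact bot_le
  · rw [CR.map_bot]; exact x.2.2.2.2
end

section
/- Key lemma for the disjunction property: let M = (F, v_Fm, v_Res) be an algebraic LRC-model and M* = (F*, v*_Fm, v_Res) the model over the add-a-top algebra F*, where v*_Fm is v_Fm composed with the natural injection A ↪ A*. Denote by ⟦A⟧ and ⟦A⟧* the interpretations of a formula term A in M and M* respectively. Then for every formula term A: (1) if ⟦A⟧* ≠ ⊤* then ⟦A⟧* = ⟦A⟧ (under the injection A ↪ A*); and (2) if ⟦A⟧* = ⊤* then ⟦A⟧ = ⊤_A. -/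
/-! ## Algebraic LRC-models: interpretation of terms -/

variable {W R : Type*} [HeytingAlgebra W] [DistribLattice R] [BoundedOrder R]

/-! ## The add-a-top construction: the implication of `A* = WithTop A` -/

open Classical in
/-- The implication `→*` on `A* = WithTop A`: `u →* w = ⊤*` if `u ≤ w`;
`u →* w = w` if `u = ⊤*` (and `u ≰ w`); and `u →* w = u ⇨ w` (computed in
`A`) otherwise. -/
noncomputable def starImp {A : Type*} [HeytingAlgebra A] (u w : WithTop A) :
    WithTop A :=
  if u ≤ w then ⊤
  else
    WithTop.recTopCoe w
      (fun a => WithTop.recTopCoe ⊤ (fun b => ((a ⇨ b : A) : WithTop A)) w) u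

/-! ## The add-a-top construction `F*` -/

section Star

variable {W R : Type*} [HeytingAlgebra W] [DistribLattice R] [BoundedOrder R]

/-- `◇* : W* → W*` maps `u` to `◇u` if `u ≠ ⊤*`, and `⊤*` to `◇⊤_W`. -/
noncomputable def diaStar (F : LRCAlgebra W R) (u : WithTop W) : WithTop W :=
  WithTop.recTopCoe ((F.dia ⊤ : W) : WithTop W)
    (fun a => ((F.dia a : W) : WithTop W)) u

open Classical in
/-- `▷* : R × W* → W*` maps `(α, u)` to `⊤*` if `α = 0` or `◇'*1 ≤ u`, and to
`α ▷ u` otherwise. -/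
noncomputable def boxStar (F : LRCAlgebra W R) (α : R) (u : WithTop W) :
    WithTop W :=
  if α = ⊥ ∨ ((F.diaR ⊤ : W) : WithTop W) ≤ u then ⊤
  else WithTop.recTopCoe ⊤ (fun a => ((F.box α a : W) : WithTop W)) u

open Classical in
/-- `▷'* : R × R → W*` maps `(α, β)` to `⊤*` if `α = 0` or `β = 1`, and to
`α ▷' β` otherwise. -/
noncomputable def boxRStar (F : LRCAlgebra W R) (α β : R) : WithTop W :=
  if α = ⊥ ∨ β = ⊤ then ⊤ else ((F.boxR α β : W) : WithTop W)

/-- `◇'* : R → W*` maps `α` to `◇'α`. -/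
noncomputable def diaRStar (F : LRCAlgebra W R) (α : R) : WithTop W :=
  ((F.diaR α : W) : WithTop W)

end Star

/-! ## Statement 12: key lemma for the disjunction property -/

section KeyLemma

variable {W R : Type*} [HeytingAlgebra W] [DistribLattice R] [BoundedOrder R]

/-- The interpretation `⟦·⟧*` of formula terms in the model
`M* = (F*, v*_Fm, v_Res)` over the add-a-top algebra `F*`, where `v*_Fm` is
`v_Fm` composed with the natural injection `W ↪ W* = WithTop W`. -/
noncomputable def starInterp (F : LRCAlgebra W R) (vF : ℕ → W) (vR : ℕ → R) :
    FmTerm → WithTop W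
  | .atom n => ((vF n : W) : WithTop W)
  | .top => ⊤
  | .bot => ⊥
  | .or a b => starInterp F vF vR a ⊔ starInterp F vF vR b
  | .and a b => starInterp F vF vR a ⊓ starInterp F vF vR b
  | .imp a b => starImp (starInterp F vF vR a) (starInterp F vF vR b)
  | .box α a => boxStar F (α.interp F vR) (starInterp F vF vR a)
  | .dia a => diaStar F (starInterp F vF vR a)
  | .diaR α => diaRStar F (α.interp F vR)
  | .boxR α β => boxRStar F (α.interp F vR) (β.interp F vR)

/-- **Key lemma for the disjunction property**: for every formula term `A`,
(1) if `⟦A⟧* ≠ ⊤*` then `⟦A⟧* = ⟦A⟧` (under the injection `W ↪ W*`), and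
(2) if `⟦A⟧* = ⊤*` then `⟦A⟧ = ⊤_W`. -/
theorem starInterp_key_lemma (F : LRCAlgebra W R) (vF : ℕ → W) (vR : ℕ → R)
    (A : FmTerm) :
    (starInterp F vF vR A ≠ ⊤ →
      starInterp F vF vR A = ((A.interp F vF vR : W) : WithTop W)) ∧
    (starInterp F vF vR A = ⊤ → A.interp F vF vR = ⊤) := by
  induction A with
  | atom n =>
      exact ⟨fun _ => rfl, fun h => absurd h WithTop.coe_ne_top⟩
  | top =>
      exact ⟨fun h => absurd rfl h, fun _ => rfl⟩
  | bot =>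
      refine ⟨fun _ => ?_, fun h => ?_⟩
      · simp [starInterp, FmTerm.interp]
      · exact absurd h (by simp [starInterp])
  | or a b iha ihb =>
      constructor
      · intro h
        simp only [starInterp] at h ⊢
        have ha : starInterp F vF vR a ≠ ⊤ := fun e => h (by simp [e])
        have hb : starInterp F vF vR b ≠ ⊤ := fun e => h (by simp [e])
        rw [iha.1 ha, ihb.1 hb, ← WithTop.coe_sup]
        rfl
      · intro h
        simp only [starInterp] at h
        rcases eq_or_ne (starInterp F vF vR a) ⊤ with ha | ha
        · simp [FmTerm.interp, iha.2 ha]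
        rcases eq_or_ne (starInterp F vF vR b) ⊤ with hb | hb
        · simp [FmTerm.interp, ihb.2 hb]
        rw [iha.1 ha, ihb.1 hb, ← WithTop.coe_sup] at h
        exact absurd h WithTop.coe_ne_top
  | and a b iha ihb =>
      constructor
      · intro h
        simp only [starInterp] at h ⊢
        rcases eq_or_ne (starInterp F vF vR a) ⊤ with ha | ha
        · rcases eq_or_ne (starInterp F vF vR b) ⊤ with hb | hb
          · exact absurd (by simp [ha, hb]) h
          · rw [ha, ihb.1 hb, top_inf_eq]
            simp [FmTerm.interp, iha.2 ha]
        · rcases eq_or_ne (starInterp F vF vR b) ⊤ with hb | hb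
          · rw [hb, iha.1 ha, inf_top_eq]
            simp [FmTerm.interp, ihb.2 hb]
          · rw [iha.1 ha, ihb.1 hb, ← WithTop.coe_inf]
            rfl
      · intro h
        simp only [starInterp] at h
        have ha : starInterp F vF vR a = ⊤ := top_le_iff.mp (h ▸ inf_le_left)
        have hb : starInterp F vF vR b = ⊤ := top_le_iff.mp (h ▸ inf_le_right)
        simp [FmTerm.interp, iha.2 ha, ihb.2 hb]
  | imp a b iha ihb =>
      simp only [starInterp, starImp, FmTerm.interp]
      split_ifs with hle
      · refine ⟨fun h => absurd rfl h, fun _ => ?_⟩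
        rw [himp_eq_top_iff]
        rcases eq_or_ne (starInterp F vF vR a) ⊤ with ha | ha
        · rw [iha.2 ha]
          have hb : starInterp F vF vR b = ⊤ := top_le_iff.mp (ha ▸ hle)
          rw [ihb.2 hb]
        · rcases eq_or_ne (starInterp F vF vR b) ⊤ with hb | hb
          · rw [ihb.2 hb]; exact le_top
          · rw [iha.1 ha, ihb.1 hb] at hle
            exact WithTop.coe_le_coe.mp hle
      · rcases eq_or_ne (starInterp F vF vR a) ⊤ with ha | ha
        · rw [ha]
          rcases eq_or_ne (starInterp F vF vR b) ⊤ with hb | hb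
          · exact absurd (hb ▸ le_top) hle
          · refine ⟨fun _ => ?_, fun h => ?_⟩
            · rw [WithTop.recTopCoe_top, ihb.1 hb, iha.2 ha, top_himp]
            · rw [WithTop.recTopCoe_top] at h
              exact absurd h hb
        · obtain ⟨x, hx⟩ := WithTop.ne_top_iff_exists.mp ha
          rw [← hx]
          rcases eq_or_ne (starInterp F vF vR b) ⊤ with hb | hb
          · rw [hb]
            refine ⟨fun h => absurd rfl h, fun _ => ?_⟩
            rw [ihb.2 hb, himp_top]
          · obtain ⟨y, hy⟩ := WithTop.ne_top_iff_exists.mp hb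
            rw [← hy]
            simp only [WithTop.recTopCoe_coe]
            refine ⟨fun _ => ?_, fun h => absurd h WithTop.coe_ne_top⟩
            have hxa : (x : WithTop W) = ((a.interp F vF vR : W) : WithTop W) :=
              hx.trans (iha.1 ha)
            have hyb : (y : WithTop W) = ((b.interp F vF vR : W) : WithTop W) :=
              hy.trans (ihb.1 hb)
            rw [WithTop.coe_eq_coe.mp hxa, WithTop.coe_eq_coe.mp hyb]
  | box α a iha =>
      simp only [starInterp, boxStar, FmTerm.interp]
      split_ifs with hc
      · refine ⟨fun h => absurd rfl h, fun _ => ?_⟩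
        rcases hc with hc | hc
        · rw [hc, F.box_bot]
        · have hle : F.diaR ⊤ ≤ a.interp F vF vR := by
            rcases eq_or_ne (starInterp F vF vR a) ⊤ with ha | ha
            · rw [iha.2 ha]; exact le_top
            · rw [iha.1 ha] at hc
              exact WithTop.coe_le_coe.mp hc
          have h1 : (⊤ : W) ≤ F.box (α.interp F vR) (a.interp F vF vR) := by
            calc (⊤ : W) = F.boxR (α.interp F vR) ⊤ := (F.boxR_top _).symm
              _ ≤ F.box (α.interp F vR) (F.diaR ⊤) := F.bd2 _ _
              _ ≤ _ := F.box_mono _ hle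
          exact top_le_iff.mp h1
      · rcases eq_or_ne (starInterp F vF vR a) ⊤ with ha | ha
        · exact absurd (Or.inr (ha ▸ le_top)) hc
        · obtain ⟨x, hx⟩ := WithTop.ne_top_iff_exists.mp ha
          rw [← hx, WithTop.recTopCoe_coe]
          refine ⟨fun _ => ?_, fun h => absurd h WithTop.coe_ne_top⟩
          have hxa : (x : WithTop W) = ((a.interp F vF vR : W) : WithTop W) :=
            hx.trans (iha.1 ha)
          rw [WithTop.coe_eq_coe.mp hxa]
  | dia a iha =>
      simp only [starInterp, diaStar, FmTerm.interp]
      rcases eq_or_ne (starInterp F vF vR a) ⊤ with ha | ha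
      · rw [ha, WithTop.recTopCoe_top, iha.2 ha]
        exact ⟨fun _ => rfl, fun h => absurd h WithTop.coe_ne_top⟩
      · obtain ⟨x, hx⟩ := WithTop.ne_top_iff_exists.mp ha
        rw [← hx, WithTop.recTopCoe_coe]
        refine ⟨fun _ => ?_, fun h => absurd h WithTop.coe_ne_top⟩
        have hxa : (x : WithTop W) = ((a.interp F vF vR : W) : WithTop W) :=
          hx.trans (iha.1 ha)
        rw [WithTop.coe_eq_coe.mp hxa]
  | diaR α =>
      exact ⟨fun _ => rfl, fun h => absurd h WithTop.coe_ne_top⟩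
  | boxR α β =>
      simp only [starInterp, boxRStar, FmTerm.interp]
      split_ifs with hc
      · refine ⟨fun h => absurd rfl h, fun _ => ?_⟩
        rcases hc with hc | hc
        · rw [hc, F.boxR_bot]
        · rw [hc, F.boxR_top]
      · exact ⟨fun _ => rfl, fun h => absurd h WithTop.coe_ne_top⟩

end KeyLemma
end

section
/- ALBA correspondence for axiom BD1: let A be a complete Heyting algebra and Q a complete lattice; let ◇ : A → A and ◇' : Q → A be completely join-preserving maps with right adjoints ■ : A → A and ■' : A → Q respectively, and let ▷ : Q × A → A turn arbitrary joins in its first coordinate into meets and be monotone in its second coordinate. Then the inequality ◇'α ⊓ (α ▷ p) ≤ ◇p holds for all α ∈ Q and p ∈ A if and only if the quasi-inequality holds: for all γ ∈ Q and x, y ∈ A, if x ≤ γ ▷ (■y) then x ≤ ◇'γ ⇨ y (where ⇨ is the Heyting implication of A). -/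
/-! ## Statement 16: ALBA correspondence for axiom BD1 -/

/-- **ALBA correspondence for BD1**: let `W` be a complete Heyting algebra
(a frame) and `R` a complete lattice; let `dia : W → W` and `diaR : R → W` be
completely join-preserving with right adjoints `bs` and `bsR` respectively,
and let `box : R → W → W` turn arbitrary joins in its first coordinate into
meets and be monotone in its second coordinate.  Then
`◇'α ⊓ (α ▷ p) ≤ ◇p` holds for all `α, p` iff for all `γ, x, y`,
`x ≤ γ ▷ ■y` implies `x ≤ ◇'γ ⇨ y`. -/
theorem alba_correspondence_bd1 {W R : Type*} [Order.Frame W]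
    [CompleteLattice R]
    (dia : W → W) (bs : W → W) (diaR : R → W) (bsR : W → R)
    (dia_sSup : ∀ S : Set W, dia (sSup S) = ⨆ a ∈ S, dia a)
    (diaR_sSup : ∀ S : Set R, diaR (sSup S) = ⨆ α ∈ S, diaR α)
    (dia_adj : ∀ u v : W, dia u ≤ v ↔ u ≤ bs v)
    (diaR_adj : ∀ (q : R) (v : W), diaR q ≤ v ↔ q ≤ bsR v)
    (box : R → W → W)
    (box_sSup : ∀ (S : Set R) (a : W), box (sSup S) a = ⨅ α ∈ S, box α a)
    (box_mono : ∀ α : R, Monotone (box α)) :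
    (∀ (α : R) (p : W), diaR α ⊓ box α p ≤ dia p) ↔
      (∀ (γ : R) (x y : W), x ≤ box γ (bs y) → x ≤ diaR γ ⇨ y) := by
  constructor
  · intro H γ x y hx
    rw [le_himp_iff, inf_comm]
    calc diaR γ ⊓ x ≤ diaR γ ⊓ box γ (bs y) := inf_le_inf_left _ hx
      _ ≤ dia (bs y) := H γ (bs y)
      _ ≤ y := (dia_adj _ _).mpr le_rfl
  · intro H α p
    have h := H α (box α p) (dia p) (box_mono α ((dia_adj _ _).mp le_rfl))
    rw [le_himp_iff, inf_comm] at h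
    exact h
end
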